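/- arXiv:1709.10458 — 10 statements merged into one kernel-verified Lean document; each statement's English description precedes it below -/
import Mathlib

section
/- Fix constants c > 0, Λ > 0, κ > 0 and α, β, γ ∈ ℝ with α ≠ 0. Define B(t,r) = α·cos(c√Λ·r) + β·e^{c√Λ·t} + γ·e^{−c√Λ·t}, C(r) = sin(c√Λ·r)/√Λ, and μ(t,r) = 2αΛ·cos(c√Λ·r)/(κ·B(t,r)). Then at every point (t,r) with B(t,r) ≠ 0 and C(r) ≠ 0 the five reduced Einstein field equations hold: (E1) −∂ᵣᵣB/B − C''/C − (∂ᵣB/B)(C'/C) = κμc² + c²Λ; (E2) ∂ₜ∂ᵣB = 0; (E3) ∂ₜₜB/B − (∂ᵣB/B)(C'/C) = c²Λ; (E4) −C''/C = c²Λ; (E5) (∂ₜₜB − ∂ᵣᵣB)/B = c²Λ. Moreover the regular-axis conditions hold: C(0) = 0 and C'(0)² = c². -/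
/-!
Write `k = c√Λ`. The metric function separates as `B = α cos(kr) + T(t)` with `T'' = k²T` and
`∂ᵣᵣB = -k²α cos(kr)`, so `∂ₜₜB - ∂ᵣᵣB = k²B`, which is (E5); likewise `C'' = -k²C` is (E4), and
(E2) holds because `∂ᵣB` does not depend on `t`. The remaining equations rest on the identity
`∂ᵣB · C' = ∂ᵣᵣB · C` (both sides are `-k²α sin(kr) cos(kr)/√Λ`): it turns (E3) into (E5), and
(E1) into `-2∂ᵣᵣB/B + k² = κμc² + c²Λ`, which is the definition of `μ`.
-/

open Real

theorem deriv_deriv_eq_of_hasDerivAt {f f' : ℝ → ℝ} {f'' x : ℝ}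
    (hf : ∀ y, HasDerivAt f (f' y) y) (hf' : HasDerivAt f' f'' x) :
    deriv (deriv f) x = f'' := by
  rw [funext fun y => (hf y).deriv]
  exact hf'.deriv

theorem deriv_cos_mul (k : ℝ) : deriv (fun r => cos (k * r)) = fun r => -(k * sin (k * r)) := by
  funext r
  simpa using deriv_comp_mul_left k cos r

theorem deriv_sin_mul (k : ℝ) : deriv (fun r => sin (k * r)) = fun r => k * cos (k * r) := by
  funext r
  simpa using deriv_comp_mul_left k sin r

theorem hasDerivAt_exp_mul (k x : ℝ) : HasDerivAt (fun r => exp (k * r)) (k * exp (k * x)) x := by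
  simpa [mul_comm] using ((hasDerivAt_id x).const_mul k).exp

theorem hasDerivAt_exp_add_exp_neg (k β γ t : ℝ) :
    HasDerivAt (fun t => β * exp (k * t) + γ * exp (-(k * t)))
      (k * (β * exp (k * t) + -γ * exp (-(k * t)))) t := by
  have hβ := (hasDerivAt_exp_mul k t).const_mul β
  have hγ := (hasDerivAt_exp_mul (-k) t).const_mul γ
  simp only [neg_mul] at hγ
  exact (hβ.add hγ).congr_deriv (by ring)

section

variable (k α β γ s : ℝ)

noncomputable def dustMetricB (t r : ℝ) : ℝ :=
  α * cos (k * r) + (β * exp (k * t) + γ * exp (-(k * t)))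

noncomputable def dustMetricC (r : ℝ) : ℝ := sin (k * r) / s

theorem deriv_dustMetricB_radial (t : ℝ) :
    deriv (dustMetricB k α β γ t) = fun r => -(α * k * sin (k * r)) := by
  unfold dustMetricB
  rw [deriv_add_const', deriv_const_mul_field', deriv_cos_mul]
  ring_nf

theorem deriv_deriv_dustMetricB_radial (t r : ℝ) :
    deriv (deriv (dustMetricB k α β γ t)) r = -(k ^ 2 * α * cos (k * r)) := by
  rw [deriv_dustMetricB_radial, deriv.fun_neg, deriv_const_mul_field, deriv_sin_mul]
  ring

theorem deriv_time_deriv_dustMetricB_radial (t r : ℝ) :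
    deriv (fun t => deriv (dustMetricB k α β γ t) r) t = 0 := by
  simp only [deriv_dustMetricB_radial, deriv_const]

theorem deriv_deriv_dustMetricB_time (t r : ℝ) :
    deriv (deriv fun t => dustMetricB k α β γ t r) t
      = k ^ 2 * (β * exp (k * t) + γ * exp (-(k * t))) := by
  unfold dustMetricB
  rw [deriv_deriv_eq_of_hasDerivAt (fun t => (hasDerivAt_exp_add_exp_neg k β γ t).const_add _)
    ((hasDerivAt_exp_add_exp_neg k β (-γ) t).const_mul k)]
  ring

theorem deriv_deriv_dustMetricB_time_sub_radial (t r : ℝ) :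
    deriv (deriv fun t => dustMetricB k α β γ t r) t - deriv (deriv (dustMetricB k α β γ t)) r
      = k ^ 2 * dustMetricB k α β γ t r := by
  rw [deriv_deriv_dustMetricB_time, deriv_deriv_dustMetricB_radial, dustMetricB]
  ring

theorem deriv_dustMetricC : deriv (dustMetricC k s) = fun r => k * cos (k * r) / s := by
  funext r
  unfold dustMetricC
  rw [deriv_div_const, deriv_sin_mul]

theorem deriv_deriv_dustMetricC (r : ℝ) :
    deriv (deriv (dustMetricC k s)) r = -(k ^ 2 * dustMetricC k s r) := by
  rw [deriv_dustMetricC, deriv_div_const, deriv_const_mul_field, deriv_cos_mul, dustMetricC]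
  ring

theorem deriv_dustMetricB_mul_deriv_dustMetricC (t r : ℝ) :
    deriv (dustMetricB k α β γ t) r * deriv (dustMetricC k s) r
      = deriv (deriv (dustMetricB k α β γ t)) r * dustMetricC k s r := by
  rw [deriv_deriv_dustMetricB_radial, deriv_dustMetricB_radial, deriv_dustMetricC, dustMetricC]
  ring

end

theorem new_solution_positive_Lambda_general
    (c Λ κ α β γ : ℝ) (hΛ : 0 < Λ) (hκ : 0 < κ)
    (B : ℝ → ℝ → ℝ) (C : ℝ → ℝ) (μ : ℝ → ℝ → ℝ)
    (hB : ∀ t r, B t r =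
      α * Real.cos (c * Real.sqrt Λ * r) + β * Real.exp (c * Real.sqrt Λ * t)
        + γ * Real.exp (-(c * Real.sqrt Λ * t)))
    (hC : ∀ r, C r = Real.sin (c * Real.sqrt Λ * r) / Real.sqrt Λ)
    (hμ : ∀ t r, μ t r = 2 * α * Λ * Real.cos (c * Real.sqrt Λ * r) / (κ * B t r)) :
    (∀ t r : ℝ, B t r ≠ 0 → C r ≠ 0 →
      -- (E1)
      (-(deriv (deriv (fun s => B t s)) r) / B t r
          - deriv (deriv C) r / C r
          - (deriv (fun s => B t s) r / B t r) * (deriv C r / C r)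
          = κ * μ t r * c ^ 2 + c ^ 2 * Λ) ∧
      -- (E2)
      (deriv (fun s => deriv (fun x => B s x) r) t = 0) ∧
      -- (E3)
      (deriv (deriv (fun s => B s r)) t / B t r
          - (deriv (fun s => B t s) r / B t r) * (deriv C r / C r) = c ^ 2 * Λ) ∧
      -- (E4)
      (-(deriv (deriv C) r) / C r = c ^ 2 * Λ) ∧
      -- (E5)
      ((deriv (deriv (fun s => B s r)) t - deriv (deriv (fun s => B t s)) r) / B t r
          = c ^ 2 * Λ)) ∧
    C 0 = 0 ∧ (deriv C 0) ^ 2 = c ^ 2 := by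
  set k := c * √Λ with hk
  have hk2 : k ^ 2 = c ^ 2 * Λ := by rw [mul_pow, sq_sqrt hΛ.le]
  obtain rfl : B = dustMetricB k α β γ := funext₂ fun t r => (hB t r).trans (add_assoc _ _ _)
  obtain rfl : C = dustMetricC k √Λ := funext hC
  have hwave : ∀ t r, dustMetricB k α β γ t r ≠ 0 →
      (deriv (deriv fun t => dustMetricB k α β γ t r) t
        - deriv (deriv (dustMetricB k α β γ t)) r) / dustMetricB k α β γ t r = k ^ 2 := by
    intro t r hB0
    rw [deriv_deriv_dustMetricB_time_sub_radial, mul_div_assoc, div_self hB0, mul_one]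
  refine ⟨fun t r hB0 hC0 => ?_, ?_, ?_⟩
  · have hradial : deriv (dustMetricB k α β γ t) r / dustMetricB k α β γ t r
        * (deriv (dustMetricC k √Λ) r / dustMetricC k √Λ r)
        = deriv (deriv (dustMetricB k α β γ t)) r / dustMetricB k α β γ t r := by
      rw [div_mul_div_comm, deriv_dustMetricB_mul_deriv_dustMetricC, mul_div_mul_right _ _ hC0]
    refine ⟨?_, deriv_time_deriv_dustMetricB_radial .., ?_, ?_, hk2 ▸ hwave t r hB0⟩
    · rw [hradial, hμ, deriv_deriv_dustMetricC, deriv_deriv_dustMetricB_radial, hk2]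
      field_simp
      ring
    · rw [hradial, div_sub_div_same, hwave t r hB0, hk2]
    · rw [deriv_deriv_dustMetricC, neg_neg, mul_div_assoc, div_self hC0, mul_one, hk2]
  · simp [dustMetricC]
  · rw [deriv_dustMetricC]
    simp only [mul_zero, cos_zero, mul_one, hk, mul_div_cancel_right₀ c (sqrt_pos.2 hΛ).ne']

/-- For `Λ > 0`, the functions `B(t,r) = α·cos(c√Λ·r) + β·e^{c√Λ·t} + γ·e^{−c√Λ·t}`,
`C(r) = sin(c√Λ·r)/√Λ` and `μ(t,r) = 2αΛ·cos(c√Λ·r)/(κ·B(t,r))` satisfy the five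
reduced Einstein field equations (E1)–(E5) of cylindrically symmetric `Λ`-dust with
constant lapse `c`, together with the regular-axis conditions `C(0) = 0`, `C'(0)² = c²`. -/
theorem new_solution_positive_Lambda
    (c Λ κ α β γ : ℝ) (hc : 0 < c) (hΛ : 0 < Λ) (hκ : 0 < κ) (hα : α ≠ 0)
    (B : ℝ → ℝ → ℝ) (C : ℝ → ℝ) (μ : ℝ → ℝ → ℝ)
    (hB : ∀ t r, B t r =
      α * Real.cos (c * Real.sqrt Λ * r) + β * Real.exp (c * Real.sqrt Λ * t)
        + γ * Real.exp (-(c * Real.sqrt Λ * t)))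
    (hC : ∀ r, C r = Real.sin (c * Real.sqrt Λ * r) / Real.sqrt Λ)
    (hμ : ∀ t r, μ t r = 2 * α * Λ * Real.cos (c * Real.sqrt Λ * r) / (κ * B t r)) :
    (∀ t r : ℝ, B t r ≠ 0 → C r ≠ 0 →
      -- (E1)
      (-(deriv (deriv (fun s => B t s)) r) / B t r
          - deriv (deriv C) r / C r
          - (deriv (fun s => B t s) r / B t r) * (deriv C r / C r)
          = κ * μ t r * c ^ 2 + c ^ 2 * Λ) ∧
      -- (E2)
      (deriv (fun s => deriv (fun x => B s x) r) t = 0) ∧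
      -- (E3)
      (deriv (deriv (fun s => B s r)) t / B t r
          - (deriv (fun s => B t s) r / B t r) * (deriv C r / C r) = c ^ 2 * Λ) ∧
      -- (E4)
      (-(deriv (deriv C) r) / C r = c ^ 2 * Λ) ∧
      -- (E5)
      ((deriv (deriv (fun s => B s r)) t - deriv (deriv (fun s => B t s)) r) / B t r
          = c ^ 2 * Λ)) ∧
    C 0 = 0 ∧ (deriv C 0) ^ 2 = c ^ 2 :=
  new_solution_positive_Lambda_general c Λ κ α β γ hΛ hκ B C μ hB hC hμ
end

section
/- Fix constants c > 0, Λ < 0, κ > 0 and α, β, γ ∈ ℝ with α ≠ 0, and write m = √(−Λ). Define B(t,r) = β·sin(c·m·t) + γ·cos(c·m·t) + α·cosh(c·m·r), C(r) = sinh(c·m·r)/m, and μ(t,r) = 2αΛ·cosh(c·m·r)/(κ·B(t,r)). Then at every point (t,r) with B(t,r) ≠ 0 and C(r) ≠ 0 the five reduced Einstein field equations hold: (E1) −∂ᵣᵣB/B − C''/C − (∂ᵣB/B)(C'/C) = κμc² + c²Λ; (E2) ∂ₜ∂ᵣB = 0; (E3) ∂ₜₜB/B − (∂ᵣB/B)(C'/C)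 = c²Λ; (E4) −C''/C = c²Λ; (E5) (∂ₜₜB − ∂ᵣᵣB)/B = c²Λ. Moreover the regular-axis conditions hold: C(0) = 0 and C'(0)² = c². -/
/-! The profile `B` separates as `T(t) + R(r)` with `T'' = -k²T`, `R'' = k²R` and `C'' = k²C`,
where `k = c·m` and `c²Λ = -k²`; moreover `R'·C' = R''·C`, since both equal `α k² sinh(kr) cosh(kr)/m`.
With these relations each field equation reduces to a polynomial identity once the
denominators `B` and `sinh(kr)` are cleared. -/

open Real

theorem deriv_sinh_mul (k : ℝ) : deriv (fun x => sinh (k * x)) = fun x => k * cosh (k * x) := by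
  funext x
  simpa [mul_comm] using ((hasDerivAt_id x).const_mul k).sinh.deriv

theorem deriv_cosh_mul (k : ℝ) : deriv (fun x => cosh (k * x)) = fun x => k * sinh (k * x) := by
  funext x
  simpa [mul_comm] using ((hasDerivAt_id x).const_mul k).cosh.deriv

theorem deriv_sin_mul_add_cos_mul (a b k : ℝ) :
    deriv (fun x => a * sin (k * x) + b * cos (k * x)) =
      fun x => -(k * b) * sin (k * x) + k * a * cos (k * x) := by
  funext x
  have hk := (hasDerivAt_id x).const_mul k
  refine ((hk.sin.const_mul a).add (hk.cos.const_mul b)).deriv.trans ?_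
  simp only [id, mul_one]
  ring

theorem deriv_deriv_sin_mul_add_cos_mul (a b k : ℝ) :
    deriv (deriv fun x => a * sin (k * x) + b * cos (k * x)) =
      fun x => -k ^ 2 * (a * sin (k * x) + b * cos (k * x)) := by
  rw [deriv_sin_mul_add_cos_mul, deriv_sin_mul_add_cos_mul]
  funext x
  ring

section SeparableProfile

variable {k α β γ : ℝ} {B : ℝ → ℝ → ℝ}

theorem deriv_snd_of_forall_eq
    (hB : ∀ t r, B t r = β * sin (k * t) + γ * cos (k * t) + α * cosh (k * r)) (t : ℝ) :
    deriv (fun s => B t s) = fun r => α * (k * sinh (k * r)) := by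
  rw [show (fun s => B t s) = _ from funext (hB t), deriv_const_add', deriv_const_mul_field',
    deriv_cosh_mul]

theorem deriv_deriv_snd_of_forall_eq
    (hB : ∀ t r, B t r = β * sin (k * t) + γ * cos (k * t) + α * cosh (k * r)) (t : ℝ) :
    deriv (deriv fun s => B t s) = fun r => α * (k * (k * cosh (k * r))) := by
  rw [deriv_snd_of_forall_eq hB, deriv_const_mul_field', deriv_const_mul_field', deriv_sinh_mul]

theorem deriv_deriv_fst_of_forall_eq
    (hB : ∀ t r, B t r = β * sin (k * t) + γ * cos (k * t) + α * cosh (k * r)) (r : ℝ) :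
    deriv (deriv fun s => B s r) = fun t => -k ^ 2 * (β * sin (k * t) + γ * cos (k * t)) := by
  rw [show (fun s => B s r) = _ from funext fun t => hB t r, deriv_add_const',
    deriv_deriv_sin_mul_add_cos_mul]

end SeparableProfile

section SinhProfile

variable {k m : ℝ} {C : ℝ → ℝ}

theorem deriv_of_forall_eq_sinh_mul_div (hC : ∀ r, C r = sinh (k * r) / m) :
    deriv C = fun r => m⁻¹ * (k * cosh (k * r)) := by
  rw [show C = _ from funext fun r => (hC r).trans (div_eq_inv_mul ..), deriv_const_mul_field',
    deriv_sinh_mul]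

theorem deriv_deriv_of_forall_eq_sinh_mul_div (hC : ∀ r, C r = sinh (k * r) / m) :
    deriv (deriv C) = fun r => m⁻¹ * (k * (k * sinh (k * r))) := by
  rw [deriv_of_forall_eq_sinh_mul_div hC, deriv_const_mul_field', deriv_const_mul_field',
    deriv_cosh_mul]

end SinhProfile

theorem new_solution_negative_Lambda_general
    (c Λ κ α β γ m : ℝ) (hΛ : Λ < 0) (hκ : 0 < κ)
    (hm : m = Real.sqrt (-Λ))
    (B : ℝ → ℝ → ℝ) (C : ℝ → ℝ) (μ : ℝ → ℝ → ℝ)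
    (hB : ∀ t r, B t r =
      β * Real.sin (c * m * t) + γ * Real.cos (c * m * t) + α * Real.cosh (c * m * r))
    (hC : ∀ r, C r = Real.sinh (c * m * r) / m)
    (hμ : ∀ t r, μ t r = 2 * α * Λ * Real.cosh (c * m * r) / (κ * B t r)) :
    (∀ t r : ℝ, B t r ≠ 0 → C r ≠ 0 →
      -- (E1)
      (-(deriv (deriv (fun s => B t s)) r) / B t r
          - deriv (deriv C) r / C r
          - (deriv (fun s => B t s) r / B t r) * (deriv C r / C r)
          = κ * μ t r * c ^ 2 + c ^ 2 * Λ) ∧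
      -- (E2)
      (deriv (fun s => deriv (fun x => B s x) r) t = 0) ∧
      -- (E3)
      (deriv (deriv (fun s => B s r)) t / B t r
          - (deriv (fun s => B t s) r / B t r) * (deriv C r / C r) = c ^ 2 * Λ) ∧
      -- (E4)
      (-(deriv (deriv C) r) / C r = c ^ 2 * Λ) ∧
      -- (E5)
      ((deriv (deriv (fun s => B s r)) t - deriv (deriv (fun s => B t s)) r) / B t r
          = c ^ 2 * Λ)) ∧
    C 0 = 0 ∧ (deriv C 0) ^ 2 = c ^ 2 := by
  have hm0 : m ≠ 0 := hm ▸ (sqrt_pos.2 (neg_pos.2 hΛ)).ne'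
  obtain rfl : Λ = -m ^ 2 := by rw [hm, sq_sqrt (neg_nonneg.2 hΛ.le), neg_neg]
  set k := c * m with hk
  have hBr := deriv_snd_of_forall_eq hB
  have hBrr := deriv_deriv_snd_of_forall_eq hB
  have hBtt := deriv_deriv_fst_of_forall_eq hB
  have hCr := deriv_of_forall_eq_sinh_mul_div hC
  have hCrr := deriv_deriv_of_forall_eq_sinh_mul_div hC
  refine ⟨fun t r hB0 hC0 => ?_, by simp [hC], by simp [hCr, hk, field]⟩
  have hS : sinh (k * r) ≠ 0 := (div_ne_zero_iff.1 (hC r ▸ hC0)).1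
  rw [hB] at hB0
  refine ⟨?_, by simp only [hBr, deriv_const], ?_, ?_, ?_⟩
  · rw [hBrr, hCrr, hBr, hCr, hμ, hC, hB]
    field_simp
    ring
  · rw [hBtt, hBr, hCr, hC, hB]
    field_simp
    ring
  · rw [hCrr, hC]
    field_simp
    ring
  · rw [hBtt, hBrr, hB]
    field_simp
    ring

/-- For `Λ < 0`, writing `m = √(−Λ)`, the functions
`B(t,r) = β·sin(c·m·t) + γ·cos(c·m·t) + α·cosh(c·m·r)`, `C(r) = sinh(c·m·r)/m` and
`μ(t,r) = 2αΛ·cosh(c·m·r)/(κ·B(t,r))` satisfy the five reduced Einstein field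
equations (E1)–(E5) of cylindrically symmetric `Λ`-dust with constant lapse `c`,
together with the regular-axis conditions `C(0) = 0`, `C'(0)² = c²`. -/
theorem new_solution_negative_Lambda
    (c Λ κ α β γ m : ℝ) (hc : 0 < c) (hΛ : Λ < 0) (hκ : 0 < κ) (hα : α ≠ 0)
    (hm : m = Real.sqrt (-Λ))
    (B : ℝ → ℝ → ℝ) (C : ℝ → ℝ) (μ : ℝ → ℝ → ℝ)
    (hB : ∀ t r, B t r =
      β * Real.sin (c * m * t) + γ * Real.cos (c * m * t) + α * Real.cosh (c * m * r))
    (hC : ∀ r, C r = Real.sinh (c * m * r) / m)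
    (hμ : ∀ t r, μ t r = 2 * α * Λ * Real.cosh (c * m * r) / (κ * B t r)) :
    (∀ t r : ℝ, B t r ≠ 0 → C r ≠ 0 →
      -- (E1)
      (-(deriv (deriv (fun s => B t s)) r) / B t r
          - deriv (deriv C) r / C r
          - (deriv (fun s => B t s) r / B t r) * (deriv C r / C r)
          = κ * μ t r * c ^ 2 + c ^ 2 * Λ) ∧
      -- (E2)
      (deriv (fun s => deriv (fun x => B s x) r) t = 0) ∧
      -- (E3)
      (deriv (deriv (fun s => B s r)) t / B t r
          - (deriv (fun s => B t s) r / B t r) * (deriv C r / C r) = c ^ 2 * Λ) ∧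
      -- (E4)
      (-(deriv (deriv C) r) / C r = c ^ 2 * Λ) ∧
      -- (E5)
      ((deriv (deriv (fun s => B s r)) t - deriv (deriv (fun s => B t s)) r) / B t r
          = c ^ 2 * Λ)) ∧
    C 0 = 0 ∧ (deriv C 0) ^ 2 = c ^ 2 :=
  new_solution_negative_Lambda_general c Λ κ α β γ m hΛ hκ hm B C μ hB hC hμ
end

section
/- Fix constants c > 0, κ > 0, β ∈ ℝ and γ ∈ ℝ with γ ≠ 0. Define B(t,r) = β + (t² + r²)/γ, C(r) = c·r, and μ(t,r) = −4/(κ·γ·c²·B(t,r)). Then at every point (t,r) with B(t,r) ≠ 0 and r ≠ 0 the five reduced Einstein field equations with Λ = 0 hold: (E1) −∂ᵣᵣB/B − C''/C − (∂ᵣB/B)(C'/C) = κμc²; (E2) ∂ₜ∂ᵣB = 0; (E3) ∂ₜₜB/B − (∂ᵣB/B)(C'/C) = 0; (E4) C'' = 0; (E5) ∂ₜₜB = ∂ᵣᵣB. Moreover the regular-axis conditions hold: C(0) = 0 and C'(0)² = c². (This is the Senovilla–Vera dust solution.) -/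
lemma svd1 (β a γ : ℝ) (s : ℝ) :
    HasDerivAt (fun s : ℝ => β + (a + s ^ 2) / γ) (2 * s / γ) s := by
  have := (((hasDerivAt_pow 2 s).const_add a).div_const γ).const_add β
  simpa [mul_comm] using this

lemma svd2 (β a γ : ℝ) :
    deriv (fun s : ℝ => β + (a + s ^ 2) / γ) = fun s => 2 * s / γ :=
  funext fun s => (svd1 β a γ s).deriv

lemma svd3 (γ : ℝ) (s : ℝ) : HasDerivAt (fun s : ℝ => 2 * s / γ) (2 / γ) s := by
  simpa using ((hasDerivAt_id s).const_mul 2).div_const γ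

/-- The Senovilla–Vera dust solution: for `Λ = 0`, the functions
`B(t,r) = β + (t² + r²)/γ`, `C(r) = c·r` and `μ(t,r) = −4/(κ·γ·c²·B(t,r))` satisfy
the five reduced Einstein field equations (E1)–(E5) of cylindrically symmetric dust
with constant lapse `c` and vanishing cosmological constant, together with the
regular-axis conditions `C(0) = 0`, `C'(0)² = c²`. -/
theorem senovilla_vera_solution
    (c κ β γ : ℝ) (hc : 0 < c) (hκ : 0 < κ) (hγ : γ ≠ 0)
    (B : ℝ → ℝ → ℝ) (C : ℝ → ℝ) (μ : ℝ → ℝ → ℝ)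
    (hB : ∀ t r, B t r = β + (t ^ 2 + r ^ 2) / γ)
    (hC : ∀ r, C r = c * r)
    (hμ : ∀ t r, μ t r = -4 / (κ * γ * c ^ 2 * B t r)) :
    (∀ t r : ℝ, B t r ≠ 0 → r ≠ 0 →
      -- (E1)
      (-(deriv (deriv (fun s => B t s)) r) / B t r
          - deriv (deriv C) r / C r
          - (deriv (fun s => B t s) r / B t r) * (deriv C r / C r)
          = κ * μ t r * c ^ 2) ∧
      -- (E2)
      (deriv (fun s => deriv (fun x => B s x) r) t = 0) ∧
      -- (E3)
      (deriv (deriv (fun s => B s r)) t / B t r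
          - (deriv (fun s => B t s) r / B t r) * (deriv C r / C r) = 0) ∧
      -- (E4)
      (deriv (deriv C) r = 0) ∧
      -- (E5)
      (deriv (deriv (fun s => B s r)) t = deriv (deriv (fun s => B t s)) r)) ∧
    C 0 = 0 ∧ (deriv C 0) ^ 2 = c ^ 2 := by
  have hCfun : C = fun r => c * r := funext hC
  have hdC : deriv C = fun _ => c := by
    funext x; rw [hCfun]; simpa using ((hasDerivAt_id x).const_mul c).deriv
  have hddC : deriv (deriv C) = fun _ => (0:ℝ) := by
    rw [hdC]; funext x; simp
  refine ⟨fun t r hBne hr => ?_, by rw [hCfun]; simp, by rw [hdC]⟩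
  have hBr : (fun s => B t s) = fun s : ℝ => β + (t ^ 2 + s ^ 2) / γ := funext fun s => hB t s
  have hBt : (fun s => B s r) = fun s : ℝ => β + (r ^ 2 + s ^ 2) / γ := by
    funext s; rw [hB]; ring
  have hdBr : deriv (fun s => B t s) = fun s => 2 * s / γ := by rw [hBr, svd2]
  have hddBr : deriv (deriv (fun s => B t s)) r = 2 / γ := by
    rw [hdBr]; exact (svd3 γ r).deriv
  have hdBt : deriv (fun s => B s r) = fun s => 2 * s / γ := by rw [hBt, svd2]
  have hddBt : deriv (deriv (fun s => B s r)) t = 2 / γ := by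
    rw [hdBt]; exact (svd3 γ t).deriv
  have hE2 : (fun s => deriv (fun x => B s x) r) = fun s : ℝ => 2 * r / γ := by
    funext s
    have : (fun x => B s x) = fun x : ℝ => β + (s ^ 2 + x ^ 2) / γ := funext fun x => hB s x
    rw [this, svd2]
  refine ⟨?_, by rw [hE2]; simp, ?_, by rw [hddC], by rw [hddBt, hddBr]⟩
  · rw [hddBr, hddC, hdBr, hdC, hCfun, hμ]
    field_simp
    ring
  · rw [hddBt, hdBr, hdC, hCfun]
    field_simp; ring
end

section
/- Fix c > 0 and ε = ±1. Let C : [0,∞) → ℝ be twice continuously differentiable with C'' ≡ 0, C(0) = 0 and C'(0) = εc, and let B : ℝ × (0,∞) → ℝ be smooth and positive, satisfying on ℝ × (0,∞): (E2) ∂ₜ∂ᵣB = 0; (E3) ∂ₜₜB·C = ∂ᵣB·C'; (E5) ∂ₜₜB = ∂ᵣᵣB; and suppose ∂ᵣB is not identically zero (equivalently, the associated dust density is not identically zero). Then C(r) = εcr for all r, and there exist constants a, β ∈ ℝ and γ ∈ ℝ \ {0} such that B(t,r) = ((t+a)² + r²)/γ + β for all (t,r) ∈ ℝ × (0,∞).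 -/
open Set

lemma sv_const_of_deriv_zero {s : Set ℝ} (hs : Convex ℝ s) (ho : IsOpen s) {g : ℝ → ℝ}
    (h : ∀ x ∈ s, HasDerivAt g 0 x) {x y : ℝ} (hx : x ∈ s) (hy : y ∈ s) : g x = g y := by
  refine hs.is_const_of_fderivWithin_eq_zero
    (fun z hz => ((h z hz).differentiableAt).differentiableWithinAt) ?_ hx hy
  intro z hz
  rw [fderivWithin_of_isOpen ho hz, ← toSpanSingleton_deriv, (h z hz).deriv]
  ext; simp

lemma sv_const_univ {g : ℝ → ℝ} (h : ∀ x : ℝ, HasDerivAt g 0 x) (x y : ℝ) : g x = g y :=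
  is_const_of_deriv_eq_zero (fun z => (h z).differentiableAt) (fun z => (h z).deriv) x y

lemma sv_fderivWithin_zero {f : ℝ → ℝ} {s : Set ℝ} {x : ℝ}
    (h : derivWithin f s x = 0) : fderivWithin ℝ f s x = 0 := by
  rw [← toSpanSingleton_derivWithin, h]; ext; simp

lemma sv_C_part (c ε : ℝ) (C : ℝ → ℝ)
    (hC2 : ContDiffOn ℝ 2 C (Set.Ici 0))
    (hC'' : ∀ r ∈ Set.Ici (0 : ℝ),
      derivWithin (derivWithin C (Set.Ici 0)) (Set.Ici 0) r = 0)
    (hC0 : C 0 = 0)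
    (hC'0 : derivWithin C (Set.Ici 0) 0 = ε * c) :
    ∀ r ∈ Set.Ici (0 : ℝ), C r = ε * c * r ∧ derivWithin C (Set.Ici 0) r = ε * c := by
  have hud : UniqueDiffOn ℝ (Set.Ici (0:ℝ)) := uniqueDiffOn_Ici 0
  have hDdiff : DifferentiableOn ℝ (derivWithin C (Set.Ici 0)) (Set.Ici 0) :=
    (hC2.derivWithin hud (m := 1) (by norm_num)).differentiableOn (by simp)
  have hD : ∀ r ∈ Set.Ici (0:ℝ), derivWithin C (Set.Ici 0) r = ε * c := by
    intro r hr
    rw [← hC'0]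
    exact (convex_Ici 0).is_const_of_fderivWithin_eq_zero hDdiff
      (fun x hx => sv_fderivWithin_zero (hC'' x hx)) hr (self_mem_Ici)
  have hCdiff : DifferentiableOn ℝ C (Set.Ici 0) := hC2.differentiableOn (by norm_num)
  have key : ∀ r ∈ Set.Ici (0:ℝ), C r - ε * c * r = 0 := by
    intro r hr
    have h0 : C 0 - ε * c * 0 = 0 := by rw [hC0]; ring
    rw [← h0]
    refine (convex_Ici 0).is_const_of_fderivWithin_eq_zero
      (hCdiff.sub ((differentiable_fun_id.const_mul (ε*c)).differentiableOn)) ?_ hr self_mem_Ici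
    intro x hx
    apply sv_fderivWithin_zero
    have hg : DifferentiableWithinAt ℝ (fun r : ℝ => ε * c * r) (Set.Ici 0) x :=
      ((differentiable_fun_id.const_mul (ε*c)).differentiableOn) x hx
    rw [derivWithin_sub (hCdiff x hx) hg, hD x hx]
    have hid : HasDerivAt (fun r : ℝ => ε * c * r) (ε * c) x := by
      simpa using (hasDerivAt_id x).const_mul (ε*c)
    rw [hid.hasDerivWithinAt.derivWithin (hud x hx)]; ring
  intro r hr
  exact ⟨by linarith [key r hr], hD r hr⟩

lemma sv_B_part (c ε : ℝ) (hc : 0 < c) (hε : ε = 1 ∨ ε = -1)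
    (C : ℝ → ℝ) (B : ℝ → ℝ → ℝ)
    (hBsmooth : ContDiffOn ℝ (⊤ : ℕ∞) (fun p : ℝ × ℝ => B p.1 p.2)
      (Set.univ ×ˢ Set.Ioi 0))
    (hE2 : ∀ t r : ℝ, 0 < r → deriv (fun s => deriv (fun x => B s x) r) t = 0)
    (hE3 : ∀ t r : ℝ, 0 < r →
      deriv (deriv (fun s => B s r)) t * C r
        = deriv (fun s => B t s) r * derivWithin C (Set.Ici 0) r)
    (hE5 : ∀ t r : ℝ, 0 < r →
      deriv (deriv (fun s => B s r)) t = deriv (deriv (fun s => B t s)) r)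
    (hnontriv : ∃ t r : ℝ, 0 < r ∧ deriv (fun s => B t s) r ≠ 0)
    (hCval : ∀ r ∈ Set.Ici (0:ℝ), C r = ε * c * r)
    (hD : ∀ r ∈ Set.Ici (0:ℝ), derivWithin C (Set.Ici 0) r = ε * c) :
    ∃ a β γ : ℝ, γ ≠ 0 ∧
      ∀ t r : ℝ, 0 < r → B t r = ((t + a) ^ 2 + r ^ 2) / γ + β := by
  set G : ℝ × ℝ → ℝ := fun p => B p.1 p.2 with hG
  set U : Set (ℝ × ℝ) := Set.univ ×ˢ Set.Ioi 0 with hUdef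
  have hU : IsOpen U := isOpen_univ.prod isOpen_Ioi
  have memU : ∀ {t r : ℝ}, 0 < r → (t, r) ∈ U := fun {t r} hr => ⟨trivial, hr⟩
  have hGdiff : ∀ t r : ℝ, 0 < r → DifferentiableAt ℝ G (t, r) := by
    intro t r hr
    exact (hBsmooth.contDiffAt (hU.mem_nhds (memU hr))).differentiableAt (by simp)
  set F : ℝ × ℝ → (ℝ × ℝ) →L[ℝ] ℝ := fderiv ℝ G with hFdef
  have hF : ContDiffOn ℝ (⊤ : ℕ∞) F U := hBsmooth.fderiv_of_isOpen hU (by simp)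
  set Bt : ℝ × ℝ → ℝ := fun p => F p (1, 0) with hBtdef
  set Br : ℝ × ℝ → ℝ := fun p => F p (0, 1) with hBrdef
  have hBtS : ContDiffOn ℝ (⊤ : ℕ∞) Bt U :=
    (ContinuousLinearMap.apply ℝ ℝ ((1:ℝ), (0:ℝ))).contDiff.comp_contDiffOn hF
  have hBrS : ContDiffOn ℝ (⊤ : ℕ∞) Br U :=
    (ContinuousLinearMap.apply ℝ ℝ ((0:ℝ), (1:ℝ))).contDiff.comp_contDiffOn hF
  have hBt_deriv : ∀ t r : ℝ, 0 < r → HasDerivAt (fun s => B s r) (Bt (t, r)) t := by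
    intro t r hr
    have h1 : HasDerivAt (fun s : ℝ => (s, r)) ((1:ℝ), (0:ℝ)) t :=
      (hasDerivAt_id t).prodMk (hasDerivAt_const t r)
    exact (hGdiff t r hr).hasFDerivAt.comp_hasDerivAt t h1
  have hBr_deriv : ∀ t r : ℝ, 0 < r → HasDerivAt (fun x => B t x) (Br (t, r)) r := by
    intro t r hr
    have h1 : HasDerivAt (fun x : ℝ => (t, x)) ((0:ℝ), (1:ℝ)) r :=
      (hasDerivAt_const r t).prodMk (hasDerivAt_id r)
    exact (hGdiff t r hr).hasFDerivAt.comp_hasDerivAt r h1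
  -- partial derivative values
  have hderiv_r : ∀ t r : ℝ, 0 < r → deriv (fun x => B t x) r = Br (t, r) :=
    fun t r hr => (hBr_deriv t r hr).deriv
  have hderiv_t : ∀ t r : ℝ, 0 < r → deriv (fun s => B s r) t = Bt (t, r) :=
    fun t r hr => (hBt_deriv t r hr).deriv
  -- smoothness along horizontal lines
  have hBr_line : ∀ r : ℝ, 0 < r → ContDiff ℝ (⊤ : ℕ∞) (fun s => Br (s, r)) := by
    intro r hr
    have hmap : Set.MapsTo (fun s : ℝ => (s, r)) Set.univ U := fun s _ => memU hr
    have := hBrS.comp ((contDiff_id.prodMk contDiff_const).contDiffOn) hmap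
    rwa [contDiffOn_univ] at this
  have hBt_line : ∀ r : ℝ, 0 < r → ContDiff ℝ (⊤ : ℕ∞) (fun s => Bt (s, r)) := by
    intro r hr
    have hmap : Set.MapsTo (fun s : ℝ => (s, r)) Set.univ U := fun s _ => memU hr
    have := hBtS.comp ((contDiff_id.prodMk contDiff_const).contDiffOn) hmap
    rwa [contDiffOn_univ] at this
  -- E2: Br independent of t
  have hBr_const : ∀ t r : ℝ, 0 < r → Br (t, r) = Br (0, r) := by
    intro t r hr
    refine is_const_of_deriv_eq_zero ((hBr_line r hr).differentiable (by simp)) ?_ t 0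
    intro x
    have h2 := hE2 x r hr
    have : (fun s => deriv (fun y => B s y) r) = fun s => Br (s, r) :=
      funext fun s => hderiv_r s r hr
    rwa [this] at h2
  set f : ℝ → ℝ := fun x => Br (0, x) with hfdef
  have hf_line : ContDiffOn ℝ (⊤ : ℕ∞) f (Set.Ioi 0) := by
    have hmap : Set.MapsTo (fun x : ℝ => ((0:ℝ), x)) (Set.Ioi 0) U := fun x hx => memU hx
    exact hBrS.comp ((contDiff_const.prodMk contDiff_id).contDiffOn) hmap
  have hf_diff : ∀ r : ℝ, 0 < r → DifferentiableAt ℝ f r := by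
    intro r hr
    exact (hf_line.contDiffAt (isOpen_Ioi.mem_nhds hr)).differentiableAt (by simp)
  have hεc : ε * c ≠ 0 := by
    rcases hε with h | h <;> simp [h] <;> positivity
  -- E3: second t-derivative
  have hBtt : ∀ t r : ℝ, 0 < r → deriv (deriv (fun s => B s r)) t * r = f r := by
    intro t r hr
    have h3 := hE3 t r hr
    rw [hCval r (le_of_lt hr), hD r (le_of_lt hr), hderiv_r t r hr, hBr_const t r hr] at h3
    have : deriv (deriv (fun s => B s r)) t * (ε * c * r)
        = deriv (deriv (fun s => B s r)) t * r * (ε * c) := by ring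
    rw [this] at h3
    exact mul_right_cancel₀ hεc h3
  -- E5: relation to deriv f
  have hODE : ∀ r : ℝ, 0 < r → deriv f r * r = f r := by
    intro r hr
    have h5 := hE5 0 r hr
    have heq : deriv (deriv (fun s => B 0 s)) r = deriv f r := by
      apply Filter.EventuallyEq.deriv_eq
      filter_upwards [isOpen_Ioi.mem_nhds hr] with x hx
      rw [hderiv_r 0 x hx]
    rw [heq] at h5
    rw [← h5]
    exact hBtt 0 r hr
  -- solve the ODE : f r / r is constant
  set k : ℝ := f 1 with hkdef
  have hfk : ∀ r : ℝ, 0 < r → f r = k * r := by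
    intro r hr
    have hcst : f r / r = f 1 / 1 := by
      refine sv_const_of_deriv_zero (g := fun x => f x / x) (convex_Ioi 0) isOpen_Ioi ?_
        (Set.mem_Ioi.mpr hr) (Set.mem_Ioi.mpr one_pos)
      intro x hx
      have hx0 : (0:ℝ) < x := hx
      have h1 := ((hf_diff x hx0).hasDerivAt).div (hasDerivAt_id x) (ne_of_gt hx0)
      have : (deriv f x * x - f x * 1) / x ^ 2 = 0 := by
        rw [mul_one, hODE x hx0, sub_self, zero_div]
      simp only [id] at h1
      rwa [this] at h1
    rw [div_one, div_eq_iff (ne_of_gt hr)] at hcst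
    rw [hcst, hkdef]
  -- k is nonzero
  have hk : k ≠ 0 := by
    obtain ⟨t0, r0, hr0, hne⟩ := hnontriv
    rw [hderiv_r t0 r0 hr0, hBr_const t0 r0 hr0] at hne
    have : f r0 = k * r0 := hfk r0 hr0
    intro h
    rw [h, zero_mul] at this
    exact hne this
  -- second t-derivative is k
  have hBtt' : ∀ t r : ℝ, 0 < r → deriv (deriv (fun s => B s r)) t = k := by
    intro t r hr
    have := hBtt t r hr
    rw [hfk r hr] at this
    exact mul_right_cancel₀ (ne_of_gt hr) this
  -- radial integration
  have hrad : ∀ t r : ℝ, 0 < r → B t r = k * r ^ 2 / 2 + (B t 1 - k / 2) := by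
    intro t r hr
    have hconst : B t r - k * r ^ 2 / 2 = B t 1 - k * 1 ^ 2 / 2 := by
      refine sv_const_of_deriv_zero (g := fun x => B t x - k * x ^ 2 / 2)
        (convex_Ioi 0) isOpen_Ioi ?_ (Set.mem_Ioi.mpr hr) (Set.mem_Ioi.mpr one_pos)
      intro x hx
      have hx0 : (0:ℝ) < x := hx
      have h1 := hBr_deriv t x hx0
      rw [hBr_const t x hx0, show Br (0, x) = k * x from hfk x hx0] at h1
      have hb : HasDerivAt (fun y : ℝ => y ^ 2) (2 * x) x := by simpa using hasDerivAt_pow 2 x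
      have h2 : HasDerivAt (fun y : ℝ => k * y ^ 2 / 2) (k * x) x := by
        have heq : (fun y : ℝ => k * y ^ 2 / 2) = fun y => (k / 2) * y ^ 2 := by
          funext y; ring
        rw [heq]
        exact (hb.const_mul (k / 2)).congr_deriv (by ring)
      exact (h1.sub h2).congr_deriv (by ring)
    norm_num at hconst
    linarith
  -- temporal integration
  set H : ℝ → ℝ := fun s => Bt (s, 1) with hHdef
  have hderivφ : deriv (fun s => B s 1) = H := funext fun t => hderiv_t t 1 one_pos
  have hH : ∀ t : ℝ, deriv H t = k := by
    intro t
    have h := hBtt' t 1 one_pos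
    rwa [hderivφ] at h
  have hHdiff : Differentiable ℝ H := (hBt_line 1 one_pos).differentiable (by simp)
  set b : ℝ := H 0 with hbdef
  have hHlin : ∀ t : ℝ, H t = k * t + b := by
    intro t
    have hcst : H t - k * t = H 0 - k * 0 := by
      refine sv_const_univ (g := fun t => H t - k * t) ?_ t 0
      intro x
      have h1 : HasDerivAt H k x := by rw [← hH x]; exact (hHdiff x).hasDerivAt
      have h2 : HasDerivAt (fun t : ℝ => k * t) k x := by
        simpa using (hasDerivAt_id x).const_mul k
      exact (h1.sub h2).congr_deriv (by ring)
    norm_num at hcst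
    linarith
  set d : ℝ := B 0 1 with hddef
  have hφ : ∀ t : ℝ, B t 1 = k * t ^ 2 / 2 + b * t + d := by
    intro t
    have hcst : B t 1 - (k * t ^ 2 / 2 + b * t) = B 0 1 - (k * 0 ^ 2 / 2 + b * 0) := by
      refine sv_const_univ (g := fun s => B s 1 - (k * s ^ 2 / 2 + b * s)) ?_ t 0
      intro x
      have h1 := hBt_deriv x 1 one_pos
      rw [show Bt (x, 1) = k * x + b from hHlin x] at h1
      have hbsq : HasDerivAt (fun y : ℝ => y ^ 2) (2 * x) x := by simpa using hasDerivAt_pow 2 x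
      have h2 : HasDerivAt (fun s : ℝ => k * s ^ 2 / 2 + b * s) (k * x + b) x := by
        have h2a : HasDerivAt (fun s : ℝ => k * s ^ 2 / 2) (k * x) x := by
          have heq : (fun y : ℝ => k * y ^ 2 / 2) = fun y => (k / 2) * y ^ 2 := by
            funext y; ring
          rw [heq]
          exact (hbsq.const_mul (k / 2)).congr_deriv (by ring)
        have h2b : HasDerivAt (fun s : ℝ => b * s) b x := by
          simpa using (hasDerivAt_id x).const_mul b
        exact h2a.add h2b
      exact (h1.sub h2).congr_deriv (by ring)
    norm_num at hcst
    linarith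
  refine ⟨b / k, d - k / 2 - b ^ 2 / (2 * k), 2 / k, div_ne_zero two_ne_zero hk, ?_⟩
  intro t r hr
  rw [hrad t r hr, hφ t]
  field_simp
  ring

/-- Uniqueness of the Senovilla–Vera solution (`Λ = 0` case): if `C'' ≡ 0` on `[0,∞)`
with `C(0) = 0`, `C'(0) = εc` (`ε = ±1`), and `B` is smooth and positive on
`ℝ × (0,∞)` satisfying (E2) `∂ₜ∂ᵣB = 0`, (E3) `∂ₜₜB·C = ∂ᵣB·C'`,
(E5) `∂ₜₜB = ∂ᵣᵣB`, with `∂ᵣB` not identically zero, then `C(r) = εcr` and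
`B(t,r) = ((t+a)² + r²)/γ + β` for some constants `a, β` and `γ ≠ 0`. -/
theorem uniqueness_senovilla_vera
    (c ε : ℝ) (hc : 0 < c) (hε : ε = 1 ∨ ε = -1)
    (C : ℝ → ℝ) (B : ℝ → ℝ → ℝ)
    (hC2 : ContDiffOn ℝ 2 C (Set.Ici 0))
    (hC'' : ∀ r ∈ Set.Ici (0 : ℝ),
      derivWithin (derivWithin C (Set.Ici 0)) (Set.Ici 0) r = 0)
    (hC0 : C 0 = 0)
    (hC'0 : derivWithin C (Set.Ici 0) 0 = ε * c)
    (hBsmooth : ContDiffOn ℝ (⊤ : ℕ∞) (fun p : ℝ × ℝ => B p.1 p.2)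
      (Set.univ ×ˢ Set.Ioi 0))
    (hBpos : ∀ t r : ℝ, 0 < r → 0 < B t r)
    (hE2 : ∀ t r : ℝ, 0 < r → deriv (fun s => deriv (fun x => B s x) r) t = 0)
    (hE3 : ∀ t r : ℝ, 0 < r →
      deriv (deriv (fun s => B s r)) t * C r
        = deriv (fun s => B t s) r * derivWithin C (Set.Ici 0) r)
    (hE5 : ∀ t r : ℝ, 0 < r →
      deriv (deriv (fun s => B s r)) t = deriv (deriv (fun s => B t s)) r)
    (hnontriv : ∃ t r : ℝ, 0 < r ∧ deriv (fun s => B t s) r ≠ 0) :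
    (∀ r ∈ Set.Ici (0 : ℝ), C r = ε * c * r) ∧
    ∃ a β γ : ℝ, γ ≠ 0 ∧
      ∀ t r : ℝ, 0 < r → B t r = ((t + a) ^ 2 + r ^ 2) / γ + β := by
  have hC := sv_C_part c ε C hC2 hC'' hC0 hC'0
  refine ⟨fun r hr => (hC r hr).1, ?_⟩
  exact sv_B_part c ε hc hε C B hBsmooth hE2 hE3 hE5 hnontriv
    (fun r hr => (hC r hr).1) (fun r hr => (hC r hr).2)
end

section
/- Fix c > 0 and Λ > 0, and let 0 < r₁ ≤ π/(c√Λ). Let C : [0,r₁) → ℝ be twice continuously differentiable with C'' = −c²Λ·C, C(0) = 0, C'(0) = c, and C > 0 on (0,r₁); let B : ℝ × (0,r₁) → ℝ be smooth and satisfy on ℝ × (0,r₁): (E2) ∂ₜ∂ᵣB = 0; (E3) ∂ₜₜB·C = c²Λ·B·C + ∂ᵣB·C'; (E5) ∂ₜₜB − ∂ᵣᵣB = c²Λ·B. Then C(r) = sin(c√Λ·r)/√Λ for all r ∈ [0,r₁), and there exist constants α, β, γ ∈ ℝ such that B(t,r) = α·cos(c√Λ·r) + β·e^{c√Λ·t}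 + γ·e^{−c√Λ·t} for all (t,r) ∈ ℝ × (0,r₁). -/
open Set ContDiff


/-- A function with vanishing derivative (within) on a convex set is constant there. -/
lemma my_const_of_hasDerivWithinAt_zero {s : Set ℝ} (hs : Convex ℝ s) {f : ℝ → ℝ}
    (hf : ∀ x ∈ s, HasDerivWithinAt f 0 s x) {x y : ℝ} (hx : x ∈ s) (hy : y ∈ s) :
    f x = f y := by
  have h := hs.norm_image_sub_le_of_norm_hasDerivWithin_le (f' := fun _ => (0 : ℝ))
    (C := 0) hf (fun z _ => by simp) hy hx
  have h0 : ‖f x - f y‖ ≤ 0 := by simpa using h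
  have := le_antisymm h0 (norm_nonneg _)
  rwa [norm_eq_zero, sub_eq_zero] at this

/-- Solutions of `g'' = k² g` on `ℝ` are combinations of `e^{kt}` and `e^{-kt}`. -/
lemma my_hyperbolic_ode {k : ℝ} (hk : 0 < k) {g : ℝ → ℝ} (hg : ContDiff ℝ ∞ g)
    (hode : ∀ t, deriv (deriv g) t = k ^ 2 * g t) :
    ∃ β γ : ℝ, ∀ t, g t = β * Real.exp (k * t) + γ * Real.exp (-(k * t)) := by
  have hg' : ContDiff ℝ ∞ (deriv g) := (contDiff_infty_iff_deriv.mp hg).2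
  have hd1 : ∀ t, HasDerivAt g (deriv g t) t := fun t => (hg.differentiable (by norm_num) t).hasDerivAt
  have hd2 : ∀ t, HasDerivAt (deriv g) (k ^ 2 * g t) t := fun t => by
    have := (hg'.differentiable (by norm_num) t).hasDerivAt
    rwa [hode t] at this
  set β : ℝ := (g 0 + deriv g 0 / k) / 2 with hβ
  set γ : ℝ := (g 0 - deriv g 0 / k) / 2 with hγ
  refine ⟨β, γ, fun t => ?_⟩
  -- u = e^{-kt}(g' + k g) is constant
  set u : ℝ → ℝ := fun t => Real.exp (-(k * t)) * (deriv g t + k * g t) with hu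
  have hexp1 : ∀ t : ℝ, HasDerivAt (fun t => Real.exp (-(k * t)))
      (Real.exp (-(k * t)) * (-k)) t := fun t => by
    have h1 : HasDerivAt (fun t : ℝ => -(k * t)) (-k) t := by
      simpa using ((hasDerivAt_id t).const_mul k).fun_neg
    exact h1.exp
  have hud : ∀ t, HasDerivAt u 0 t := by
    intro t
    have h2 : HasDerivAt (fun t => deriv g t + k * g t) (k ^ 2 * g t + k * deriv g t) t :=
      (hd2 t).add ((hd1 t).const_mul k)
    have := (hexp1 t).fun_mul h2
    refine this.congr_deriv ?_
    ring
  have huc : ∀ t, u t = 2 * k * β := by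
    intro t
    have h := is_const_of_deriv_eq_zero (fun s => (hud s).differentiableAt)
      (fun s => (hud s).deriv) t 0
    rw [h]
    simp only [hu]
    rw [hβ]
    field_simp
    simp
    ring
  have hu' : ∀ t, deriv g t + k * g t = 2 * k * β * Real.exp (k * t) := by
    intro t
    have h := huc t
    simp only [hu] at h
    have he : Real.exp (-(k * t)) ≠ 0 := Real.exp_ne_zero _
    have := congrArg (· * Real.exp (k * t)) h
    rw [mul_comm (Real.exp (-(k * t))), mul_assoc, ← Real.exp_add] at this
    simpa using this
  -- w = e^{kt} g - β e^{2kt} is constant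
  set w : ℝ → ℝ := fun t => Real.exp (k * t) * g t - β * Real.exp (2 * k * t) with hw
  have hwd : ∀ t, HasDerivAt w 0 t := by
    intro t
    have h1 : HasDerivAt (fun t : ℝ => k * t) k t := by
      simpa using (hasDerivAt_id t).const_mul k
    have h2 : HasDerivAt (fun t : ℝ => 2 * k * t) (2 * k) t := by
      simpa using (hasDerivAt_id t).const_mul (2 * k)
    have h3 := (h1.exp.mul (hd1 t)).sub ((h2.exp).const_mul β)
    have hval : Real.exp (k * t) * k * g t + Real.exp (k * t) * deriv g t
        - β * (Real.exp (2 * k * t) * (2 * k)) = 0 := by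
      have := hu' t
      have h2kt : Real.exp (2 * k * t) = Real.exp (k * t) * Real.exp (k * t) := by
        rw [← Real.exp_add]; ring_nf
      rw [h2kt]
      nlinarith [this, Real.exp_pos (k * t)]
    rw [hval] at h3
    exact h3
  have hwc : w t = γ := by
    have h := is_const_of_deriv_eq_zero (fun s => (hwd s).differentiableAt)
      (fun s => (hwd s).deriv) t 0
    rw [h]
    simp only [hw]
    simp [hβ, hγ]
    ring
  -- unfold
  simp only [hw] at hwc
  have he : Real.exp (k * t) ≠ 0 := Real.exp_ne_zero _
  have h2kt : Real.exp (2 * k * t) = Real.exp (k * t) * Real.exp (k * t) := by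
    rw [← Real.exp_add]; ring_nf
  have hinv : Real.exp (-(k * t)) = (Real.exp (k * t))⁻¹ := by
    rw [Real.exp_neg]
  rw [h2kt] at hwc
  rw [hinv]
  field_simp
  nlinarith [hwc]
lemma part1 (c Λ r₁ : ℝ) (hc : 0 < c) (hΛ : 0 < Λ) (hr₁ : 0 < r₁)
    (C : ℝ → ℝ)
    (hC2 : ContDiffOn ℝ 2 C (Set.Ico 0 r₁))
    (hC'' : ∀ r ∈ Set.Ico (0 : ℝ) r₁,
      derivWithin (derivWithin C (Set.Ico 0 r₁)) (Set.Ico 0 r₁) r = -(c ^ 2 * Λ) * C r)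
    (hC0 : C 0 = 0) (hC'0 : derivWithin C (Set.Ico 0 r₁) 0 = c) :
    ∀ r ∈ Set.Ico (0 : ℝ) r₁,
      C r = c / (c * Real.sqrt Λ) * Real.sin (c * Real.sqrt Λ * r) ∧
      derivWithin C (Set.Ico 0 r₁) r = c * Real.cos (c * Real.sqrt Λ * r) := by
  set I : Set ℝ := Set.Ico (0:ℝ) r₁ with hIdef
  set k := c * Real.sqrt Λ with hkdef
  have hsΛ : 0 < Real.sqrt Λ := Real.sqrt_pos.mpr hΛ
  have hk : 0 < k := mul_pos hc hsΛ
  have hk2 : k ^ 2 = c ^ 2 * Λ := by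
    rw [hkdef, mul_pow, Real.sq_sqrt hΛ.le]
  have hIu : UniqueDiffOn ℝ I := uniqueDiffOn_Ico 0 r₁
  have hIc : Convex ℝ I := convex_Ico 0 r₁
  have h0I : (0:ℝ) ∈ I := ⟨le_refl 0, hr₁⟩
  have hC1 : DifferentiableOn ℝ C I := hC2.differentiableOn (by norm_num)
  have hC'1 : DifferentiableOn ℝ (derivWithin C I) I :=
    (hC2.derivWithin hIu (m := 1) (by norm_num)).differentiableOn (by norm_num)
  have hEderiv : ∀ r ∈ I, HasDerivWithinAt (fun x =>
      (derivWithin C I x - c * Real.cos (k * x)) ^ 2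
        + k ^ 2 * (C x - c / k * Real.sin (k * x)) ^ 2) 0 I r := by
    intro r hr
    have hsin : HasDerivAt (fun x => Real.sin (k * x)) (Real.cos (k * r) * k) r := by
      simpa using (((hasDerivAt_id r).const_mul k).sin)
    have hcos : HasDerivAt (fun x => Real.cos (k * x)) (-Real.sin (k * r) * k) r := by
      simpa using (((hasDerivAt_id r).const_mul k).cos)
    have hCw : HasDerivWithinAt C (derivWithin C I r) I r := (hC1 r hr).hasDerivWithinAt
    have hC'w : HasDerivWithinAt (derivWithin C I) (-(c ^ 2 * Λ) * C r) I r := by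
      have h := (hC'1 r hr).hasDerivWithinAt
      rwa [hC'' r hr] at h
    have h1 : HasDerivWithinAt (fun x => derivWithin C I x - c * Real.cos (k * x))
        (-(c ^ 2 * Λ) * C r - c * (-Real.sin (k * r) * k)) I r :=
      hC'w.sub ((hcos.const_mul c).hasDerivWithinAt)
    have h2 : HasDerivWithinAt (fun x => C x - c / k * Real.sin (k * x))
        (derivWithin C I r - c / k * (Real.cos (k * r) * k)) I r :=
      hCw.sub ((hsin.const_mul (c / k)).hasDerivWithinAt)
    have h3 := ((h1.pow 2).add ((h2.pow 2).const_mul (k ^ 2)))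
    refine h3.congr_deriv ?_
    have hck : c ^ 2 * Λ = k ^ 2 := hk2.symm
    rw [hck]
    field_simp
    have hk' : k * k⁻¹ = 1 := mul_inv_cancel₀ hk.ne'
    linear_combination (-2 * k * derivWithin C I r * c * Real.sin (k * r)
      + 2 * k * c ^ 2 * Real.cos (k * r) * Real.sin (k * r)
      + 2 * k ^ 2 * derivWithin C I r * C r
      - 2 * k ^ 2 * c * Real.cos (k * r) * C r) * hk'
  have hEconst : ∀ r ∈ I,
      (derivWithin C I r - c * Real.cos (k * r)) ^ 2
        + k ^ 2 * (C r - c / k * Real.sin (k * r)) ^ 2 = 0 := by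
    intro r hr
    have h := my_const_of_hasDerivWithinAt_zero hIc hEderiv hr h0I
    rw [h, hC0, hC'0]
    simp
  intro r hr
  have hEr := hEconst r hr
  have hA : (derivWithin C I r - c * Real.cos (k * r)) ^ 2 = 0 := by
    nlinarith [sq_nonneg (k * (C r - c / k * Real.sin (k * r))), hEr,
      sq_nonneg (derivWithin C I r - c * Real.cos (k * r)),
      sq_nonneg (C r - c / k * Real.sin (k * r))]
  have hD : (k * (C r - c / k * Real.sin (k * r))) ^ 2 = 0 := by
    nlinarith [sq_nonneg (derivWithin C I r - c * Real.cos (k * r)), hEr,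
      sq_nonneg (C r - c / k * Real.sin (k * r))]
  constructor
  · have h := pow_eq_zero_iff (n := 2) (by norm_num) |>.mp hD
    have h2 : C r - c / k * Real.sin (k * r) = 0 := by
      rcases mul_eq_zero.mp h with h' | h'
      · exact absurd h' hk.ne'
      · exact h'
    linarith [h2]
  · have h := pow_eq_zero_iff (n := 2) (by norm_num) |>.mp hA
    linarith [h]

lemma part2 (c Λ r₁ : ℝ) (hc : 0 < c) (hΛ : 0 < Λ) (hr₁ : 0 < r₁)
    (C : ℝ → ℝ) (B : ℝ → ℝ → ℝ)
    (hC2 : ContDiffOn ℝ 2 C (Set.Ico 0 r₁))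
    (hCpos : ∀ r : ℝ, 0 < r → r < r₁ → 0 < C r)
    (hC'val : ∀ r ∈ Set.Ico (0:ℝ) r₁,
      derivWithin C (Set.Ico 0 r₁) r = c * Real.cos (c * Real.sqrt Λ * r))
    (hBsmooth : ContDiffOn ℝ (⊤ : ℕ∞) (fun p : ℝ × ℝ => B p.1 p.2)
      (Set.univ ×ˢ Set.Ioo 0 r₁))
    (hE2 : ∀ t r : ℝ, 0 < r → r < r₁ →
      deriv (fun s => deriv (fun x => B s x) r) t = 0)
    (hE3 : ∀ t r : ℝ, 0 < r → r < r₁ →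
      deriv (deriv (fun s => B s r)) t * C r
        = c ^ 2 * Λ * B t r * C r
          + deriv (fun s => B t s) r * derivWithin C (Set.Ico 0 r₁) r)
    (hE5 : ∀ t r : ℝ, 0 < r → r < r₁ →
      deriv (deriv (fun s => B s r)) t - deriv (deriv (fun s => B t s)) r
        = c ^ 2 * Λ * B t r) :
    ∃ α β γ : ℝ, ∀ t r : ℝ, 0 < r → r < r₁ →
      B t r = α * Real.cos (c * Real.sqrt Λ * r)
        + β * Real.exp (c * Real.sqrt Λ * t) + γ * Real.exp (-(c * Real.sqrt Λ * t)) := by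
  set k := c * Real.sqrt Λ with hkdef
  have hsΛ : 0 < Real.sqrt Λ := Real.sqrt_pos.mpr hΛ
  have hk : 0 < k := mul_pos hc hsΛ
  have hk2 : k ^ 2 = c ^ 2 * Λ := by
    rw [hkdef, mul_pow, Real.sq_sqrt hΛ.le]
  set S : Set (ℝ × ℝ) := Set.univ ×ˢ Set.Ioo 0 r₁ with hSdef
  have hSopen : IsOpen S := isOpen_univ.prod isOpen_Ioo
  set F : ℝ × ℝ → ℝ := fun p => B p.1 p.2 with hFdef
  have hFsm : ContDiffOn ℝ ∞ F S := hBsmooth.of_le (by simp)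
  have hmem : ∀ t r : ℝ, 0 < r → r < r₁ → (t, r) ∈ S := by
    intro t r h1 h2
    exact ⟨Set.mem_univ t, h1, h2⟩
  -- the partial derivative in the second variable, as a function
  have hP2sm : ContDiffOn ℝ ∞ (fun p : ℝ × ℝ => fderiv ℝ F p (0, 1)) S :=
    (hFsm.fderiv_of_isOpen hSopen (by norm_num)).clm_apply contDiffOn_const
  -- ∂ᵣ B as HasDerivAt
  have hd_r : ∀ t r : ℝ, 0 < r → r < r₁ →
      HasDerivAt (fun x => B t x) (fderiv ℝ F (t, r) (0, 1)) r := by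
    intro t r h1 h2
    have hdF : DifferentiableAt ℝ F (t, r) :=
      (hFsm.differentiableOn (by norm_num)).differentiableAt
        (hSopen.mem_nhds (hmem t r h1 h2))
    have hj : HasDerivAt (fun x : ℝ => ((t, x) : ℝ × ℝ)) ((0 : ℝ), (1 : ℝ)) r := by
      simpa using (hasDerivAt_const r t).prodMk (hasDerivAt_id r)
    exact hdF.hasFDerivAt.comp_hasDerivAt r hj
  -- ∂ᵣ B is independent of t
  have hconst : ∀ r : ℝ, 0 < r → r < r₁ → ∀ t : ℝ,
      fderiv ℝ F (t, r) (0, 1) = fderiv ℝ F (0, r) (0, 1) := by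
    intro r h1 h2 t
    have hsm : ContDiff ℝ ∞ (fun s : ℝ => fderiv ℝ F (s, r) (0, 1)) := by
      rw [← contDiffOn_univ]
      exact hP2sm.comp (contDiff_id.prodMk contDiff_const).contDiffOn
        (fun s _ => hmem s r h1 h2)
    have heq : (fun s => deriv (fun x => B s x) r)
        = fun s => fderiv ℝ F (s, r) (0, 1) :=
      funext fun s => (hd_r s r h1 h2).deriv
    exact is_const_of_deriv_eq_zero (hsm.differentiable (by norm_num))
      (fun s => by rw [← heq]; exact hE2 s r h1 h2) t 0
  -- splitting B t r = f r + g t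
  set r₀ : ℝ := r₁ / 2 with hr₀def
  have hr₀1 : 0 < r₀ := by positivity
  have hr₀2 : r₀ < r₁ := by rw [hr₀def]; linarith
  set f : ℝ → ℝ := fun x => B 0 x - B 0 r₀ with hfdef
  set g : ℝ → ℝ := fun s => B s r₀ with hgdef
  have hIooc : Convex ℝ (Set.Ioo (0:ℝ) r₁) := convex_Ioo 0 r₁
  have hsplit : ∀ t r : ℝ, 0 < r → r < r₁ → B t r = f r + g t := by
    intro t r h1 h2
    have hφ : ∀ x ∈ Set.Ioo (0:ℝ) r₁,
        HasDerivWithinAt (fun x => B t x - B 0 x) 0 (Set.Ioo 0 r₁) x := by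
      intro x hx
      have h := ((hd_r t x hx.1 hx.2).sub (hd_r 0 x hx.1 hx.2)).hasDerivWithinAt
        (s := Set.Ioo (0:ℝ) r₁)
      rwa [hconst x hx.1 hx.2 t, sub_self] at h
    have h := my_const_of_hasDerivWithinAt_zero hIooc hφ
      (Set.mem_Ioo.mpr ⟨h1, h2⟩) (Set.mem_Ioo.mpr ⟨hr₀1, hr₀2⟩)
    simp only [hfdef, hgdef]
    linarith [h]
  -- smoothness of g
  have hgsm : ContDiff ℝ ∞ g := by
    rw [← contDiffOn_univ]
    exact hFsm.comp (contDiff_id.prodMk contDiff_const).contDiffOn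
      (fun s _ => hmem s r₀ hr₀1 hr₀2)
  -- ∂ₜₜ B = g''
  have htt : ∀ t r : ℝ, 0 < r → r < r₁ →
      deriv (deriv (fun s => B s r)) t = deriv (deriv g) t := by
    intro t r h1 h2
    have hfun : (fun s => B s r) = fun s => g s + f r :=
      funext fun s => by rw [hsplit s r h1 h2]; ring
    rw [hfun]
    have h : deriv (fun s => g s + f r) = deriv g :=
      funext fun s => deriv_add_const _
    rw [h]
  -- first r-derivative
  have hr1 : ∀ t r : ℝ, 0 < r → r < r₁ →
      deriv (fun x => B t x) r = fderiv ℝ F (0, r) (0, 1) := by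
    intro t r h1 h2
    rw [(hd_r t r h1 h2).deriv, hconst r h1 h2 t]
  -- second r-derivative
  have hrr : ∀ t r : ℝ, 0 < r → r < r₁ →
      deriv (deriv (fun x => B t x)) r
        = deriv (fun x => fderiv ℝ F (0, x) (0, 1)) r := by
    intro t r h1 h2
    have hev : deriv (fun x => B t x) =ᶠ[nhds r] fun x => fderiv ℝ F (0, x) (0, 1) := by
      filter_upwards [Ioo_mem_nhds h1 h2] with x hx
      exact hr1 t x hx.1 hx.2
    exact hev.deriv_eq
  -- ψ = ∂ᵣB(0,·) is smooth on Ioo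
  have hψsm : ContDiffOn ℝ ∞ (fun x => fderiv ℝ F (0, x) (0, 1)) (Set.Ioo 0 r₁) :=
    hP2sm.comp (contDiff_const.prodMk contDiff_id).contDiffOn
      (fun x hx => hmem 0 x hx.1 hx.2)
  have hψd : ∀ r : ℝ, 0 < r → r < r₁ →
      HasDerivAt (fun x => fderiv ℝ F (0, x) (0, 1))
        (deriv (fun x => fderiv ℝ F (0, x) (0, 1)) r) r := by
    intro r h1 h2
    exact ((hψsm.differentiableOn (by norm_num)).differentiableAt
      (isOpen_Ioo.mem_nhds ⟨h1, h2⟩)).hasDerivAt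
  -- C as HasDerivAt at interior points
  have hCd : ∀ r : ℝ, 0 < r → r < r₁ →
      HasDerivAt C (c * Real.cos (k * r)) r := by
    intro r h1 h2
    have hnb : Set.Ico (0:ℝ) r₁ ∈ nhds r := Ico_mem_nhds h1 h2
    have hdiff : DifferentiableAt ℝ C r :=
      (hC2.differentiableOn (by norm_num)).differentiableAt hnb
    have h := hdiff.hasDerivAt
    rwa [← derivWithin_of_mem_nhds hnb, hC'val r ⟨h1.le, h2⟩] at h
  -- wave relation: ∂ᵣᵣB(0,r)·C r = ∂ᵣB(0,r)·C' r
  have hwave : ∀ r : ℝ, 0 < r → r < r₁ →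
      deriv (fun x => fderiv ℝ F (0, x) (0, 1)) r * C r
        = fderiv ℝ F (0, r) (0, 1) * (c * Real.cos (k * r)) := by
    intro r h1 h2
    have e3 := hE3 0 r h1 h2
    have e5 := hE5 0 r h1 h2
    rw [hrr 0 r h1 h2] at e5
    rw [hr1 0 r h1 h2, hC'val r ⟨h1.le, h2⟩] at e3
    linear_combination e3 - C r * e5
  -- the quotient ∂ᵣB(0,r)/C r is constant
  have hq : ∀ r ∈ Set.Ioo (0:ℝ) r₁,
      HasDerivWithinAt (fun x => fderiv ℝ F (0, x) (0, 1) / C x) 0 (Set.Ioo 0 r₁) r := by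
    intro r hr
    have hne : C r ≠ 0 := (hCpos r hr.1 hr.2).ne'
    have h := (hψd r hr.1 hr.2).div (hCd r hr.1 hr.2) hne
    have hz : (deriv (fun x => fderiv ℝ F (0, x) (0, 1)) r * C r
        - fderiv ℝ F (0, r) (0, 1) * (c * Real.cos (k * r))) / C r ^ 2 = 0 := by
      rw [hwave r hr.1 hr.2]; ring
    rw [hz] at h
    exact h.hasDerivWithinAt
  set a : ℝ := fderiv ℝ F (0, r₀) (0, 1) / C r₀ with hadef
  have hψa : ∀ r : ℝ, 0 < r → r < r₁ → fderiv ℝ F (0, r) (0, 1) = a * C r := by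
    intro r h1 h2
    have h := my_const_of_hasDerivWithinAt_zero hIooc hq ⟨h1, h2⟩ ⟨hr₀1, hr₀2⟩
    have hne : C r ≠ 0 := (hCpos r h1 h2).ne'
    rw [← hadef] at h
    field_simp at h
    linarith [h]
  -- the separated E3 equation
  have hE3' : ∀ t r : ℝ, 0 < r → r < r₁ →
      deriv (deriv g) t = k ^ 2 * (f r + g t) + a * c * Real.cos (k * r) := by
    intro t r h1 h2
    have e3 := hE3 t r h1 h2
    rw [htt t r h1 h2, hr1 t r h1 h2, hC'val r ⟨h1.le, h2⟩, hψa r h1 h2,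
      hsplit t r h1 h2, ← hk2] at e3
    have hne : C r ≠ 0 := (hCpos r h1 h2).ne'
    have h2' : deriv (deriv g) t * C r
        = (k ^ 2 * (f r + g t) + a * c * Real.cos (k * r)) * C r := by
      linear_combination e3
    exact mul_right_cancel₀ hne h2'
  set m : ℝ := a * c * Real.cos (k * r₀) with hmdef
  have hfr₀ : f r₀ = 0 := by simp [hfdef]
  have hgode : ∀ t, deriv (deriv g) t = k ^ 2 * g t + m := by
    intro t
    have h := hE3' t r₀ hr₀1 hr₀2
    rw [hfr₀] at h
    rw [h, hmdef]; ring
  have hffor : ∀ r : ℝ, 0 < r → r < r₁ →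
      k ^ 2 * f r + a * c * Real.cos (k * r) = m := by
    intro r h1 h2
    have h := hE3' 0 r h1 h2
    have h' := hgode 0
    linear_combination h' - h
  have hGsm : ContDiff ℝ ∞ (fun t => g t + m / k ^ 2) := hgsm.add contDiff_const
  have hdG : deriv (fun t => g t + m / k ^ 2) = deriv g :=
    funext fun t => deriv_add_const _
  have hGode : ∀ t, deriv (deriv (fun t => g t + m / k ^ 2)) t
      = k ^ 2 * ((fun t => g t + m / k ^ 2) t) := by
    intro t
    rw [hdG, hgode t]
    simp only
    field_simp
  obtain ⟨β, γ, hβγ⟩ := my_hyperbolic_ode hk hGsm hGode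
  refine ⟨-(a * c) / k ^ 2, β, γ, ?_⟩
  intro t r h1 h2
  have hk2ne : k ^ 2 ≠ 0 := by positivity
  have e1 := hffor r h1 h2
  have e2 := hβγ t
  rw [hsplit t r h1 h2]
  field_simp at e2 ⊢
  linear_combination e1 + e2

/-- Uniqueness of the regular cylindrically symmetric `Λ`-dust solutions with
vanishing azimuthal expansion component, for `Λ > 0`: if `C'' = −c²Λ·C` on `[0,r₁)`
with `C(0) = 0`, `C'(0) = c`, `C > 0` on `(0,r₁)`, and `B` is smooth on `ℝ × (0,r₁)`
satisfying (E2) `∂ₜ∂ᵣB = 0`, (E3) `∂ₜₜB·C = c²Λ·B·C + ∂ᵣB·C'`,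
(E5) `∂ₜₜB − ∂ᵣᵣB = c²Λ·B`, then `C(r) = sin(c√Λ·r)/√Λ` and
`B(t,r) = α·cos(c√Λ·r) + β·e^{c√Λ·t} + γ·e^{−c√Λ·t}` for some constants `α, β, γ`. -/
theorem uniqueness_positive_Lambda
    (c Λ r₁ : ℝ) (hc : 0 < c) (hΛ : 0 < Λ)
    (hr₁ : 0 < r₁) (hr₁' : r₁ ≤ Real.pi / (c * Real.sqrt Λ))
    (C : ℝ → ℝ) (B : ℝ → ℝ → ℝ)
    (hC2 : ContDiffOn ℝ 2 C (Set.Ico 0 r₁))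
    (hC'' : ∀ r ∈ Set.Ico (0 : ℝ) r₁,
      derivWithin (derivWithin C (Set.Ico 0 r₁)) (Set.Ico 0 r₁) r
        = -(c ^ 2 * Λ) * C r)
    (hC0 : C 0 = 0)
    (hC'0 : derivWithin C (Set.Ico 0 r₁) 0 = c)
    (hCpos : ∀ r : ℝ, 0 < r → r < r₁ → 0 < C r)
    (hBsmooth : ContDiffOn ℝ (⊤ : ℕ∞) (fun p : ℝ × ℝ => B p.1 p.2)
      (Set.univ ×ˢ Set.Ioo 0 r₁))
    (hE2 : ∀ t r : ℝ, 0 < r → r < r₁ →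
      deriv (fun s => deriv (fun x => B s x) r) t = 0)
    (hE3 : ∀ t r : ℝ, 0 < r → r < r₁ →
      deriv (deriv (fun s => B s r)) t * C r
        = c ^ 2 * Λ * B t r * C r
          + deriv (fun s => B t s) r * derivWithin C (Set.Ico 0 r₁) r)
    (hE5 : ∀ t r : ℝ, 0 < r → r < r₁ →
      deriv (deriv (fun s => B s r)) t - deriv (deriv (fun s => B t s)) r
        = c ^ 2 * Λ * B t r) :
    (∀ r ∈ Set.Ico (0 : ℝ) r₁, C r = Real.sin (c * Real.sqrt Λ * r) / Real.sqrt Λ) ∧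
    ∃ α β γ : ℝ, ∀ t r : ℝ, 0 < r → r < r₁ →
      B t r = α * Real.cos (c * Real.sqrt Λ * r)
        + β * Real.exp (c * Real.sqrt Λ * t) + γ * Real.exp (-(c * Real.sqrt Λ * t)) := by
  have hp1 := part1 c Λ r₁ hc hΛ hr₁ C hC2 hC'' hC0 hC'0
  constructor
  · intro r hr
    rw [(hp1 r hr).1]
    have hsΛ : Real.sqrt Λ ≠ 0 := (Real.sqrt_pos.mpr hΛ).ne'
    field_simp
  · exact part2 c Λ r₁ hc hΛ hr₁ C B hC2 hCpos (fun r hr => (hp1 r hr).2)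
      hBsmooth hE2 hE3 hE5
end

section
/- Fix c > 0 and Λ < 0, write m = √(−Λ), and let 0 < r₁ ≤ ∞. Let C : [0,r₁) → ℝ be twice continuously differentiable with C'' = −c²Λ·C (i.e. C'' = c²m²·C), C(0) = 0, C'(0) = c, and C > 0 on (0,r₁); let B : ℝ × (0,r₁) → ℝ be smooth and satisfy on ℝ × (0,r₁): (E2) ∂ₜ∂ᵣB = 0; (E3) ∂ₜₜB·C = c²Λ·B·C + ∂ᵣB·C'; (E5) ∂ₜₜB − ∂ᵣᵣB = c²Λ·B. Then C(r) = sinh(c·m·r)/m for all r ∈ [0,r₁), and there exist constants α, β, γ ∈ ℝ such that B(t,r) = α·cosh(c·m·r) + β·sin(c·m·t) + γ·cos(c·m·t) for all (t,r) ∈ ℝ × (0,r₁). -/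
lemma hasDerivAt_partial_fst {F : ℝ × ℝ → ℝ} {t r : ℝ}
    (h : DifferentiableAt ℝ F (t, r)) :
    HasDerivAt (fun s => F (s, r)) (fderiv ℝ F (t, r) (1, 0)) t := by
  have := h.hasFDerivAt.comp_hasDerivAt t
    ((hasDerivAt_id t).prodMk (hasDerivAt_const t r))
  exact this

lemma hasDerivAt_partial_snd {F : ℝ × ℝ → ℝ} {t r : ℝ}
    (h : DifferentiableAt ℝ F (t, r)) :
    HasDerivAt (fun x => F (t, x)) (fderiv ℝ F (t, r) (0, 1)) r := by
  have := h.hasFDerivAt.comp_hasDerivAt r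
    ((hasDerivAt_const r t).prodMk (hasDerivAt_id r))
  exact this

lemma const_of_hasDerivWithinAt_zero {f : ℝ → ℝ} {s : Set ℝ} (hs : Convex ℝ s)
    (hf : ∀ x ∈ s, HasDerivWithinAt f 0 s x) {x y : ℝ} (hx : x ∈ s) (hy : y ∈ s) :
    f x = f y := by
  have h := hs.norm_image_sub_le_of_norm_hasFDerivWithin_le
    (f' := fun _ => (0 : ℝ →L[ℝ] ℝ)) (C := 0)
    (fun z hz => by
      have h0 : (ContinuousLinearMap.smulRight (1 : ℝ →L[ℝ] ℝ) (0:ℝ)) = 0 := by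
        ext; simp
      simpa [h0] using (hf z hz).hasFDerivWithinAt)
    (fun z hz => le_of_eq (by simp)) hx hy
  simp only [zero_mul, norm_le_zero_iff, sub_eq_zero] at h
  exact h.symm

lemma eq_zero_of_hasDerivWithinAt_smul {k : ℝ} {u : ℝ → ℝ} {s : Set ℝ} (hs : Convex ℝ s)
    (h0 : (0:ℝ) ∈ s) (hu0 : u 0 = 0)
    (hu : ∀ x ∈ s, HasDerivWithinAt u (k * u x) s x) :
    ∀ x ∈ s, u x = 0 := by
  intro x hx
  have key : ∀ y ∈ s, HasDerivWithinAt (fun z => u z * Real.exp (-k * z)) 0 s y := by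
    intro y hy
    have h1 : HasDerivAt (fun z : ℝ => Real.exp (-k * z)) (Real.exp (-k * y) * -k) y := by
      have : HasDerivAt (fun z : ℝ => -k * z) (-k) y := by
        simpa using (hasDerivAt_id y).const_mul (-k)
      exact this.exp
    have h2 : HasDerivWithinAt (fun z => u z * Real.exp (-k * z)) _ s y :=
      (hu y hy).mul h1.hasDerivWithinAt
    convert h2 using 1
    ring
  have h := const_of_hasDerivWithinAt_zero hs key hx h0
  have hx0 : u x * Real.exp (-k * x) = 0 := by simpa [hu0] using h
  rcases mul_eq_zero.1 hx0 with h | h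
  · exact h
  · exact absurd h (Real.exp_ne_zero _)
/-- Uniqueness of the regular cylindrically symmetric `Λ`-dust solutions with
vanishing azimuthal expansion component, for `Λ < 0`, with `m = √(−Λ)`: on the
domain `S = [0,r₁)` with `0 < r₁ ≤ ∞` (i.e. `S = [0,r₁)` or `S = [0,∞)`), if
`C'' = −c²Λ·C = c²m²·C` with `C(0) = 0`, `C'(0) = c`, `C > 0` on the interior
`(0,r₁)`, and `B` is smooth on `ℝ × (0,r₁)` satisfying (E2) `∂ₜ∂ᵣB = 0`,
(E3) `∂ₜₜB·C = c²Λ·B·C + ∂ᵣB·C'`, (E5) `∂ₜₜB − ∂ᵣᵣB = c²Λ·B`, then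
`C(r) = sinh(c·m·r)/m` and `B(t,r) = α·cosh(c·m·r) + β·sin(c·m·t) + γ·cos(c·m·t)`
for some constants `α, β, γ`. -/
theorem uniqueness_negative_Lambda
    (c Λ m : ℝ) (hc : 0 < c) (hΛ : Λ < 0) (hm : m = Real.sqrt (-Λ))
    (S : Set ℝ)
    (hS : S = Set.Ici 0 ∨ ∃ r₁ : ℝ, 0 < r₁ ∧ S = Set.Ico 0 r₁)
    (C : ℝ → ℝ) (B : ℝ → ℝ → ℝ)
    (hC2 : ContDiffOn ℝ 2 C S)
    (hC'' : ∀ r ∈ S, derivWithin (derivWithin C S) S r = -(c ^ 2 * Λ) * C r)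
    (hC0 : C 0 = 0)
    (hC'0 : derivWithin C S 0 = c)
    (hCpos : ∀ r ∈ interior S, 0 < C r)
    (hBsmooth : ContDiffOn ℝ (⊤ : ℕ∞) (fun p : ℝ × ℝ => B p.1 p.2)
      (Set.univ ×ˢ interior S))
    (hE2 : ∀ t : ℝ, ∀ r ∈ interior S,
      deriv (fun s => deriv (fun x => B s x) r) t = 0)
    (hE3 : ∀ t : ℝ, ∀ r ∈ interior S,
      deriv (deriv (fun s => B s r)) t * C r
        = c ^ 2 * Λ * B t r * C r + deriv (fun s => B t s) r * derivWithin C S r)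
    (hE5 : ∀ t : ℝ, ∀ r ∈ interior S,
      deriv (deriv (fun s => B s r)) t - deriv (deriv (fun s => B t s)) r
        = c ^ 2 * Λ * B t r) :
    (∀ r ∈ S, C r = Real.sinh (c * m * r) / m) ∧
    ∃ α β γ : ℝ, ∀ t : ℝ, ∀ r ∈ interior S,
      B t r = α * Real.cosh (c * m * r) + β * Real.sin (c * m * t)
        + γ * Real.cos (c * m * t) := by
  have hm0 : 0 < m := by
    rw [hm]; exact Real.sqrt_pos.2 (by linarith)
  have hm2 : m ^ 2 = -Λ := by rw [hm]; exact Real.sq_sqrt (by linarith)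
  set k := c * m with hkdef
  have hk0 : 0 < k := mul_pos hc hm0
  have hk2 : k ^ 2 = -(c ^ 2 * Λ) := by
    rw [hkdef, mul_pow, hm2]; ring
  -- structure of S
  have hconv : Convex ℝ S := by
    rcases hS with h | ⟨r₁, _, h⟩ <;> rw [h]
    exacts [convex_Ici 0, convex_Ico 0 r₁]
  have hUD : UniqueDiffOn ℝ S := by
    rcases hS with h | ⟨r₁, _, h⟩ <;> rw [h]
    exacts [uniqueDiffOn_Ici 0, uniqueDiffOn_Ico 0 r₁]
  have h0S : (0 : ℝ) ∈ S := by
    rcases hS with h | ⟨r₁, hr₁, h⟩ <;> rw [h]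
    exacts [Set.self_mem_Ici, Set.mem_Ico.2 ⟨le_refl 0, hr₁⟩]
  -- derivatives of C
  have hCdiff : DifferentiableOn ℝ C S := hC2.differentiableOn two_ne_zero
  have hC'2 : ContDiffOn ℝ 1 (derivWithin C S) S := hC2.derivWithin hUD le_rfl
  have hC'diff : DifferentiableOn ℝ (derivWithin C S) S := hC'2.differentiableOn one_ne_zero
  have hCd : ∀ r ∈ S, HasDerivWithinAt C (derivWithin C S r) S r :=
    fun r hr => (hCdiff r hr).hasDerivWithinAt
  have hCd2 : ∀ r ∈ S, HasDerivWithinAt (derivWithin C S) (k ^ 2 * C r) S r := by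
    intro r hr
    have := (hC'diff r hr).hasDerivWithinAt
    rwa [hC'' r hr, ← hk2] at this
  -- hyperbolic helpers
  have hsinh : ∀ r : ℝ, HasDerivAt (fun x => Real.sinh (k * x)) (k * Real.cosh (k * r)) r := by
    intro r
    have h1 : HasDerivAt (fun x : ℝ => k * x) k r := by
      simpa using (hasDerivAt_id r).const_mul k
    have h2 : HasDerivAt (fun x => Real.sinh (k * x)) _ r :=
      (Real.hasDerivAt_sinh (k * r)).comp r h1
    convert h2 using 1
    ring
  have hcosh : ∀ r : ℝ, HasDerivAt (fun x => Real.cosh (k * x)) (k * Real.sinh (k * r)) r := by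
    intro r
    have h1 : HasDerivAt (fun x : ℝ => k * x) k r := by
      simpa using (hasDerivAt_id r).const_mul k
    have h2 : HasDerivAt (fun x => Real.cosh (k * x)) _ r :=
      (Real.hasDerivAt_cosh (k * r)).comp r h1
    convert h2 using 1
    ring
  -- Part 1 : C r = sinh (k r) / m on S
  set u : ℝ → ℝ := fun r =>
    (derivWithin C S r - c * Real.cosh (k * r)) + k * (C r - Real.sinh (k * r) / m)
    with hudef
  have hu0 : u 0 = 0 := by
    simp [hudef, hC'0, hC0]
  have hu : ∀ r ∈ S, HasDerivWithinAt u (k * u r) S r := by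
    intro r hr
    have h1 : HasDerivWithinAt
        (fun x => (derivWithin C S x - c * Real.cosh (k * x))
          + k * (C x - Real.sinh (k * x) / m))
        ((k ^ 2 * C r - c * (k * Real.sinh (k * r)))
          + k * (derivWithin C S r - k * Real.cosh (k * r) / m)) S r := by
      exact (((hCd2 r hr).sub (((hcosh r).hasDerivWithinAt).const_mul c)).add
        (((hCd r hr).sub (((hsinh r).hasDerivWithinAt).div_const m)).const_mul k))
    convert h1 using 1
    have hmne : m ≠ 0 := ne_of_gt hm0
    rw [hudef]
    field_simp
    ring
  have huzero : ∀ r ∈ S, u r = 0 := eq_zero_of_hasDerivWithinAt_smul hconv h0S hu0 hu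
  set w : ℝ → ℝ := fun r => C r - Real.sinh (k * r) / m with hwdef
  have hw0 : w 0 = 0 := by simp [hwdef, hC0]
  have hw : ∀ r ∈ S, HasDerivWithinAt w ((-k) * w r) S r := by
    intro r hr
    have h1 : HasDerivWithinAt w (derivWithin C S r - k * Real.cosh (k * r) / m) S r :=
      (hCd r hr).sub (((hsinh r).hasDerivWithinAt).div_const m)
    convert h1 using 1
    have h2 := huzero r hr
    rw [hudef] at h2
    have hcc : k * Real.cosh (k * r) / m = c * Real.cosh (k * r) := by
      rw [hkdef]; field_simp
    rw [hwdef, hcc]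
    simp only []
    linarith
  have hwzero : ∀ r ∈ S, w r = 0 := eq_zero_of_hasDerivWithinAt_smul hconv h0S hw0 hw
  have hCeq : ∀ r ∈ S, C r = Real.sinh (k * r) / m := by
    intro r hr
    have := hwzero r hr
    rw [hwdef] at this
    linarith
  refine ⟨hCeq, ?_⟩

  -- ====================== Part 2 ======================
  have hkne : k ≠ 0 := ne_of_gt hk0
  have hmne : m ≠ 0 := ne_of_gt hm0
  have hcne : c ≠ 0 := ne_of_gt hc
  set U := interior S with hUdef
  have hUopen : IsOpen U := isOpen_interior
  have hUconv : Convex ℝ U := hconv.interior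
  have hUS : U ⊆ S := interior_subset
  obtain ⟨r₀, hr₀⟩ : ∃ r₀, r₀ ∈ U := by
    rcases hS with h | ⟨r₁, hr₁, h⟩
    · exact ⟨1, by rw [hUdef, h, interior_Ici]; exact Set.mem_Ioi.2 one_pos⟩
    · refine ⟨r₁ / 2, ?_⟩
      rw [hUdef, h, interior_Ico]
      exact Set.mem_Ioo.2 ⟨by linarith, by linarith⟩
  set F : ℝ × ℝ → ℝ := fun p => B p.1 p.2 with hFdef
  set Ω : Set (ℝ × ℝ) := Set.univ ×ˢ U with hΩdef
  have hΩ : IsOpen Ω := isOpen_univ.prod hUopen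
  have hmem : ∀ (t r : ℝ), r ∈ U → ((t, r) : ℝ × ℝ) ∈ Ω := fun t r hr => ⟨trivial, hr⟩
  have hFsm : ContDiffOn ℝ (⊤ : ℕ∞) F Ω := hBsmooth
  have hFdiff : ∀ (t r : ℝ), r ∈ U → DifferentiableAt ℝ F (t, r) :=
    fun t r hr => (hFsm.contDiffAt (hΩ.mem_nhds (hmem t r hr))).differentiableAt (by simp)
  set G : ℝ × ℝ → ℝ := fun p => fderiv ℝ F p (1, 0) with hGdef
  set H : ℝ × ℝ → ℝ := fun p => fderiv ℝ F p (0, 1) with hHdef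
  have hF1 : ContDiffOn ℝ (⊤ : ℕ∞) (fun p => fderiv ℝ F p) Ω := hFsm.fderiv_of_isOpen hΩ (by simp)
  have hGsm : ContDiffOn ℝ (⊤ : ℕ∞) G Ω := hF1.clm_apply contDiffOn_const
  have hHsm : ContDiffOn ℝ (⊤ : ℕ∞) H Ω := hF1.clm_apply contDiffOn_const
  have hGdiff : ∀ (t r : ℝ), r ∈ U → DifferentiableAt ℝ G (t, r) :=
    fun t r hr => (hGsm.contDiffAt (hΩ.mem_nhds (hmem t r hr))).differentiableAt (by simp)
  have hHdiff : ∀ (t r : ℝ), r ∈ U → DifferentiableAt ℝ H (t, r) :=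
    fun t r hr => (hHsm.contDiffAt (hΩ.mem_nhds (hmem t r hr))).differentiableAt (by simp)
  -- first partials of B
  have hΦB : ∀ (t r : ℝ), r ∈ U → HasDerivAt (fun s => B s r) (G (t, r)) t :=
    fun t r hr => hasDerivAt_partial_fst (hFdiff t r hr)
  have hΨB : ∀ (t r : ℝ), r ∈ U → HasDerivAt (fun x => B t x) (H (t, r)) r :=
    fun t r hr => hasDerivAt_partial_snd (hFdiff t r hr)
  -- second partials
  set T2 : ℝ → ℝ → ℝ := fun t r => fderiv ℝ G (t, r) (1, 0) with hT2def
  set f' : ℝ → ℝ := fun r => fderiv ℝ H (0, r) (0, 1) with hf'def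
  set f : ℝ → ℝ := fun r => H (0, r) with hfdef
  have hGt : ∀ (t r : ℝ), r ∈ U → HasDerivAt (fun s => G (s, r)) (T2 t r) t :=
    fun t r hr => hasDerivAt_partial_fst (hGdiff t r hr)
  have hHt : ∀ (t r : ℝ), r ∈ U →
      HasDerivAt (fun s => H (s, r)) (fderiv ℝ H (t, r) (1, 0)) t :=
    fun t r hr => hasDerivAt_partial_fst (hHdiff t r hr)
  have hf'at : ∀ r ∈ U, HasDerivAt f (f' r) r :=
    fun r hr => hasDerivAt_partial_snd (hHdiff 0 r hr)
  -- rewriting inner derivatives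
  have hderiv_t : ∀ (r : ℝ), r ∈ U → (deriv fun s => B s r) = fun s => G (s, r) :=
    fun r hr => funext fun s => (hΦB s r hr).deriv
  have hderiv_r_fun : ∀ (r : ℝ), r ∈ U →
      (fun s => deriv (fun x => B s x) r) = fun s => H (s, r) :=
    fun r hr => funext fun s => (hΨB s r hr).deriv
  -- E2 : H is constant in t
  have hHconst : ∀ (t r : ℝ), r ∈ U → H (t, r) = f r := by
    intro t r hr
    have hdiff : Differentiable ℝ (fun s => H (s, r)) :=
      fun s => (hHt s r hr).differentiableAt
    have hzero : ∀ s, deriv (fun s => H (s, r)) s = 0 := by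
      intro s
      have h := hE2 s r hr
      rwa [hderiv_r_fun r hr] at h
    exact is_const_of_deriv_eq_zero hdiff hzero t 0
  -- second t derivative of B
  have hBtt : ∀ (t r : ℝ), r ∈ U → deriv (deriv fun s => B s r) t = T2 t r := by
    intro t r hr
    rw [hderiv_t r hr]
    exact (hGt t r hr).deriv
  -- second r derivative of B
  have hBrr : ∀ (t r : ℝ), r ∈ U → deriv (deriv fun s => B t s) r = f' r := by
    intro t r hr
    have he1 : (deriv fun s => B t s) =ᶠ[nhds r] fun x => H (t, x) := by
      filter_upwards [hUopen.mem_nhds hr] with x hx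
      exact (hΨB t x hx).deriv
    have he2 : (fun x => H (t, x)) =ᶠ[nhds r] f := by
      filter_upwards [hUopen.mem_nhds hr] with x hx
      exact hHconst t x hx
    rw [he1.deriv_eq, he2.deriv_eq]
    exact (hf'at r hr).deriv
  -- derivWithin C S on U
  have hCnhds : ∀ r ∈ U, S ∈ nhds r := fun r hr => mem_interior_iff_mem_nhds.1 hr
  have hCev : ∀ r ∈ U, C =ᶠ[nhds r] fun x => Real.sinh (k * x) / m := by
    intro r hr
    filter_upwards [hCnhds r hr] with x hx
    exact hCeq x hx
  have hCW : ∀ r ∈ U, derivWithin C S r = c * Real.cosh (k * r) := by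
    intro r hr
    rw [derivWithin_of_mem_nhds (hCnhds r hr), (hCev r hr).deriv_eq,
      ((hsinh r).div_const m).deriv, hkdef]
    field_simp
  have hCderivU : ∀ r ∈ U, HasDerivAt C (c * Real.cosh (k * r)) r := by
    intro r hr
    have hd : HasDerivAt (fun x => Real.sinh (k * x) / m)
        (c * Real.cosh (k * r)) r := by
      have h1 : HasDerivAt (fun x => Real.sinh (k * x) / m) _ r := (hsinh r).div_const m
      convert h1 using 1
      rw [hkdef]; field_simp
    exact hd.congr_of_eventuallyEq (hCev r hr)
  -- key relation f' * C = f * C'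
  have hkey : ∀ r ∈ U, f' r * C r = f r * (c * Real.cosh (k * r)) := by
    intro r hr
    have h3 := hE3 0 r hr
    have h5 := hE5 0 r hr
    rw [hBtt 0 r hr] at h3 h5
    rw [hBrr 0 r hr] at h5
    rw [hCW r hr] at h3
    have hψ : deriv (fun s => B 0 s) r = f r := by
      rw [(hΨB 0 r hr).deriv]
    rw [hψ] at h3
    have h6 : (T2 0 r - f' r) * C r = c ^ 2 * Λ * B 0 r * C r := by rw [h5]
    linear_combination h3 - h6
  -- f = lam * C on U
  set lam : ℝ := f r₀ / C r₀ with hlamdef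
  have hq : ∀ r ∈ U, f r / C r = lam := by
    intro r hr
    have hconst : ∀ x ∈ U, HasDerivWithinAt (fun z => f z / C z) 0 U x := by
      intro x hx
      have hd : HasDerivAt (fun z => f z / C z) _ x := (hf'at x hx).div (hCderivU x hx) (ne_of_gt (hCpos x hx))
      have hz : f' x * C x - f x * (c * Real.cosh (k * x)) = 0 := by
        rw [hkey x hx]; ring
      rw [hz] at hd
      simpa using hd.hasDerivWithinAt
    exact const_of_hasDerivWithinAt_zero (f := fun z => f z / C z) hUconv hconst hr hr₀
  have hflam : ∀ r ∈ U, f r = lam * C r := by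
    intro r hr
    have h := hq r hr
    rwa [div_eq_iff (ne_of_gt (hCpos r hr))] at h
  set α : ℝ := lam / (k * m) with hαdef
  -- B t r = (B t r₀ - α cosh(k r₀)) + α cosh (k r)
  have hBform : ∀ (t r : ℝ), r ∈ U →
      B t r - α * Real.cosh (k * r) = B t r₀ - α * Real.cosh (k * r₀) := by
    intro t r hr
    refine const_of_hasDerivWithinAt_zero
      (f := fun z => B t z - α * Real.cosh (k * z)) hUconv ?_ hr hr₀
    intro x hx
    have hd1 : HasDerivAt (fun z => B t z) (f x) x := by
      have h := hΨB t x hx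
      rwa [hHconst t x hx] at h
    have hd2 : HasDerivAt (fun z => B t z - α * Real.cosh (k * z))
        (f x - α * (k * Real.sinh (k * x))) x := hd1.sub ((hcosh x).const_mul α)
    have hz : f x - α * (k * Real.sinh (k * x)) = 0 := by
      have h1 := hflam x hx
      rw [hCeq x (hUS hx)] at h1
      rw [h1, hαdef, hkdef]
      field_simp
      ring
    rw [hz] at hd2
    exact hd2.hasDerivWithinAt
  -- value of f' at r₀
  have hf'r₀ : f' r₀ = lam * (c * Real.cosh (k * r₀)) := by
    have he : f =ᶠ[nhds r₀] fun x => lam * (Real.sinh (k * x) / m) := by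
      filter_upwards [hUopen.mem_nhds hr₀] with x hx
      rw [hflam x hx, hCeq x (hUS hx)]
    have hd : HasDerivAt (fun x => lam * (Real.sinh (k * x) / m))
        (lam * (k * Real.cosh (k * r₀) / m)) r₀ := ((hsinh r₀).div_const m).const_mul lam
    have h3 : f' r₀ = lam * (k * Real.cosh (k * r₀) / m) := by
      rw [← (hf'at r₀ hr₀).deriv]
      exact (hd.congr_of_eventuallyEq he).deriv
    rw [h3, hkdef]
    field_simp
  -- the t-ODE
  have hODE : ∀ t : ℝ, T2 t r₀ = -k ^ 2 * (B t r₀ - α * Real.cosh (k * r₀)) := by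
    intro t
    have h5 := hE5 t r₀ hr₀
    rw [hBtt t r₀ hr₀, hBrr t r₀ hr₀, hf'r₀] at h5
    have hα : k ^ 2 * α = c * lam := by
      rw [hαdef, hkdef]; field_simp
    linear_combination h5 + B t r₀ * hk2 - Real.cosh (k * r₀) * hα
  -- trig helpers
  have hsin : ∀ t : ℝ, HasDerivAt (fun x => Real.sin (k * x)) (k * Real.cos (k * t)) t := by
    intro t
    have h1 : HasDerivAt (fun x : ℝ => k * x) k t := by
      simpa using (hasDerivAt_id t).const_mul k
    have h2 : HasDerivAt (fun x => Real.sin (k * x)) _ t :=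
      (Real.hasDerivAt_sin (k * t)).comp t h1
    convert h2 using 1
    ring
  have hcos : ∀ t : ℝ, HasDerivAt (fun x => Real.cos (k * x)) (-(k * Real.sin (k * t))) t := by
    intro t
    have h1 : HasDerivAt (fun x : ℝ => k * x) k t := by
      simpa using (hasDerivAt_id t).const_mul k
    have h2 : HasDerivAt (fun x => Real.cos (k * x)) _ t :=
      (Real.hasDerivAt_cos (k * t)).comp t h1
    convert h2 using 1
    ring
  -- oscillator uniqueness via energy
  set β : ℝ := G (0, r₀) / k with hβdef
  set γ : ℝ := B 0 r₀ - α * Real.cosh (k * r₀) with hγdef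
  set D : ℝ → ℝ := fun t => B t r₀ - α * Real.cosh (k * r₀)
    - β * Real.sin (k * t) - γ * Real.cos (k * t) with hDdef
  set D1 : ℝ → ℝ := fun t => G (t, r₀) - β * k * Real.cos (k * t)
    + γ * k * Real.sin (k * t) with hD1def
  have hD' : ∀ t : ℝ, HasDerivAt D (D1 t) t := by
    intro t
    have h1 : HasDerivAt D _ t := (((hΦB t r₀ hr₀).sub_const (α * Real.cosh (k * r₀))).sub
      ((hsin t).const_mul β)).sub ((hcos t).const_mul γ)
    convert h1 using 1
    rw [hD1def]
    ring
  have hD1' : ∀ t : ℝ, HasDerivAt D1 (-k ^ 2 * D t) t := by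
    intro t
    have h1 : HasDerivAt D1 _ t := ((hGt t r₀ hr₀).sub ((hcos t).const_mul (β * k))).add
      ((hsin t).const_mul (γ * k))
    convert h1 using 1
    rw [hDdef, hODE t]
    ring
  have hE : ∀ t : ℝ, HasDerivAt (fun x => D1 x ^ 2 + k ^ 2 * D x ^ 2) 0 t := by
    intro t
    have h1 : HasDerivAt (fun x => D1 x ^ 2 + k ^ 2 * D x ^ 2) _ t := ((hD1' t).pow 2).add (((hD' t).pow 2).const_mul (k ^ 2))
    convert h1 using 1
    ring
  have hEconst : ∀ t : ℝ, D1 t ^ 2 + k ^ 2 * D t ^ 2 = D1 0 ^ 2 + k ^ 2 * D 0 ^ 2 :=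
    fun t => is_const_of_deriv_eq_zero (fun x => (hE x).differentiableAt)
      (fun x => (hE x).deriv) t 0
  have hD0 : D 0 = 0 := by
    rw [hDdef]
    simp [hγdef]
  have hD10 : D1 0 = 0 := by
    rw [hD1def]
    simp [hβdef]
    field_simp
    ring
  have hDzero : ∀ t : ℝ, D t = 0 := by
    intro t
    have h := hEconst t
    rw [hD0, hD10] at h
    have h2 : k ^ 2 * D t ^ 2 ≤ 0 := by nlinarith [sq_nonneg (D1 t)]
    have h3 : 0 ≤ k ^ 2 * D t ^ 2 := by positivity
    have h4 : D t ^ 2 = 0 := by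
      have h5 : k ^ 2 * D t ^ 2 = 0 := le_antisymm h2 h3
      have h6 : k ^ 2 ≠ 0 := pow_ne_zero 2 hkne
      exact (mul_eq_zero.1 h5).resolve_left h6
    exact pow_eq_zero_iff two_ne_zero |>.1 h4
  refine ⟨α, β, γ, ?_⟩
  intro t r hr
  have h1 := hBform t r hr
  have h2 := hDzero t
  rw [hDdef] at h2
  simp only [] at h2
  linarith [h1, h2]
end

section
/- Fix Λ ∈ ℝ, c₁ ∈ ℝ \ {0} and c₂ ∈ ℝ. Define a(t) = 4·exp((t+c₂)/c₁) / (c₁²·exp(2(t+c₂)/c₁) − 4Λ). Then at every t where c₁²·exp(2(t+c₂)/c₁) − 4Λ ≠ 0, the function a satisfies the ordinary differential equation (a'/a)'(t) = Λ·a(t)². -/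
/-!
The reciprocal `w = 1/a = (c₁²/4)·e^φ − Λ·e^{−φ}`, with `φ = (t + c₂)/c₁`, solves `w'' = w/c₁²`, and
`(a'/a)' = −(w'/w)' = (w'² − w w'')/w²`. For `w = A e^φ + B e^{−φ}` the numerator
`w'² − w w''` is the constant `−4AB/c₁²`, which equals `Λ` here; hence `(a'/a)' = Λ/w² = Λa²`.
-/

open Real

section LogDeriv

variable {𝕜 : Type*} [NontriviallyNormedField 𝕜]

theorem logDeriv_fun_inv {w : 𝕜 → 𝕜} (hw : Differentiable 𝕜 w) :
    logDeriv (fun x => (w x)⁻¹) = fun x => -logDeriv w x := by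
  funext x
  simpa [zpow_neg_one] using logDeriv_fun_zpow (hw x) (-1)

theorem deriv_logDeriv_inv {w : 𝕜 → 𝕜} {w'' x : 𝕜} (hw : Differentiable 𝕜 w) (hwx : w x ≠ 0)
    (hw'' : HasDerivAt (deriv w) w'' x) :
    deriv (logDeriv fun y => (w y)⁻¹) x = (deriv w x ^ 2 - w x * w'') / w x ^ 2 := by
  have h : HasDerivAt (logDeriv w) ((w'' * w x - deriv w x * deriv w x) / w x ^ 2) x :=
    hw''.div (hw x).hasDerivAt hwx
  rw [logDeriv_fun_inv hw, deriv.fun_neg, h.deriv]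
  ring

end LogDeriv

section ExpCombination

variable (A B c₁ c₂ : ℝ)

noncomputable def expCombination (t : ℝ) : ℝ :=
  A * exp ((t + c₂) / c₁) + B * exp (-((t + c₂) / c₁))

theorem hasDerivAt_expCombination (t : ℝ) :
    HasDerivAt (expCombination A B c₁ c₂) (expCombination A (-B) c₁ c₂ t / c₁) t := by
  have hφ : HasDerivAt (fun s => (s + c₂) / c₁) (1 / c₁) t :=
    ((hasDerivAt_id t).add_const c₂).div_const c₁
  refine ((hφ.exp.const_mul A).fun_add (hφ.fun_neg.exp.const_mul B)).congr_deriv ?_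
  rw [expCombination]
  ring

theorem deriv_expCombination :
    deriv (expCombination A B c₁ c₂) = fun t => expCombination A (-B) c₁ c₂ t / c₁ :=
  funext fun t => (hasDerivAt_expCombination A B c₁ c₂ t).deriv

theorem hasDerivAt_deriv_expCombination (t : ℝ) :
    HasDerivAt (deriv (expCombination A B c₁ c₂)) (expCombination A B c₁ c₂ t / c₁ / c₁) t := by
  rw [deriv_expCombination]
  simpa using (hasDerivAt_expCombination A (-B) c₁ c₂ t).div_const c₁

theorem expCombination_neg_sq_sub_sq (t : ℝ) :
    expCombination A (-B) c₁ c₂ t ^ 2 - expCombination A B c₁ c₂ t ^ 2 = -4 * A * B := by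
  have h : exp ((t + c₂) / c₁) * exp (-((t + c₂) / c₁)) = 1 := by
    rw [← exp_add, add_neg_cancel, exp_zero]
  simp only [expCombination]
  linear_combination (-4 * A * B) * h

end ExpCombination

theorem expCombination_eq_div (Λ c₁ c₂ t : ℝ) :
    expCombination (c₁ ^ 2 / 4) (-Λ) c₁ c₂ t
      = (c₁ ^ 2 * exp (2 * (t + c₂) / c₁) - 4 * Λ) / (4 * exp ((t + c₂) / c₁)) := by
  rw [expCombination, exp_neg, mul_div_assoc, two_mul, exp_add]
  field_simp
  ring

/-- The explicit lapse function `a(t) = 4·exp((t+c₂)/c₁)/(c₁²·exp(2(t+c₂)/c₁) − 4Λ)`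
satisfies the ODE `(a'/a)' = Λ·a²` wherever its denominator is nonzero (the case
`λ = 0` of the separation `(a'/a)' − Λa² = λ`). -/
theorem lapse_ode_lambda_zero
    (Λ c₁ c₂ : ℝ) (hc₁ : c₁ ≠ 0)
    (a : ℝ → ℝ)
    (ha : ∀ t, a t = 4 * Real.exp ((t + c₂) / c₁)
      / (c₁ ^ 2 * Real.exp (2 * (t + c₂) / c₁) - 4 * Λ)) :
    ∀ t : ℝ, c₁ ^ 2 * Real.exp (2 * (t + c₂) / c₁) - 4 * Λ ≠ 0 →
      deriv (fun s => deriv a s / a s) t = Λ * a t ^ 2 := by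
  intro t ht
  have hwronski := expCombination_neg_sq_sub_sq (c₁ ^ 2 / 4) (-Λ) c₁ c₂ t
  rw [neg_neg] at hwronski
  set w := expCombination (c₁ ^ 2 / 4) (-Λ) c₁ c₂ with hw_def
  have ha_inv : a = fun s => (w s)⁻¹ := by
    funext s
    rw [ha, hw_def, expCombination_eq_div, inv_div]
  have hw : w t ≠ 0 := by
    rw [hw_def, expCombination_eq_div]
    exact div_ne_zero ht (by positivity)
  have hw_diff : Differentiable ℝ w := fun s =>
    (hasDerivAt_expCombination _ _ _ _ s).differentiableAt
  change deriv (logDeriv a) t = _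
  rw [ha_inv, deriv_logDeriv_inv hw_diff hw (hasDerivAt_deriv_expCombination _ _ _ _ t),
    deriv_expCombination, neg_neg]
  field_simp
  linear_combination hwronski
end

section
/- Fix α > 0, r₀ > 0, ρ₀ ∈ ℝ. Define R(T,ρ) = r₀(1 − r₀²/α²) + (1 − 3r₀²/α²)(ρ−ρ₀) − [ (T+ρ−ρ₀)³ − (T−ρ+ρ₀)³ ]/(6α²) − r₀[ (T−ρ+ρ₀)² + (T+ρ−ρ₀)² ]/(2α²). Then: (i) R satisfies the wave equation ∂²R/∂T² = ∂²R/∂ρ² at every (T,ρ) ∈ ℝ²; (ii) R(T,ρ₀) = r₀(1 − (T² + r₀²)/α²) for all T; and (iii) (∂R/∂ρ)(T,ρ₀) = 1 − (T² + 3r₀²)/α² for all T. -/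
private lemma cubic_hasDerivAt (a b c d x : ℝ) :
    HasDerivAt (fun x : ℝ => a + b * x + c * x ^ 2 + d * x ^ 3)
      (b + 2 * c * x + 3 * d * x ^ 2) x := by
  have h : HasDerivAt (fun x : ℝ => a + b * x + c * x ^ 2 + d * x ^ 3)
      (0 + b * 1 + c * (↑2 * x ^ 1) + d * (↑3 * x ^ 2)) x :=
    (((hasDerivAt_const x a).add ((hasDerivAt_id' (𝕜 := ℝ) x).const_mul b)).add
      ((hasDerivAt_pow 2 x).const_mul c)).add ((hasDerivAt_pow 3 x).const_mul d)
  convert h using 1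
  norm_num
  ring

private lemma cubic_deriv (a b c d : ℝ) :
    deriv (fun x : ℝ => a + b * x + c * x ^ 2 + d * x ^ 3)
      = fun x => b + 2 * c * x + 3 * d * x ^ 2 :=
  funext fun x => (cubic_hasDerivAt a b c d x).deriv

/-- The exterior function
`R(T,ρ) = r₀(1 − r₀²/α²) + (1 − 3r₀²/α²)(ρ−ρ₀) − [(T+ρ−ρ₀)³ − (T−ρ+ρ₀)³]/(6α²)
− r₀[(T−ρ+ρ₀)² + (T+ρ−ρ₀)²]/(2α²)` satisfies the wave equation `R_{,TT} = R_{,ρρ}`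
everywhere, and the matching conditions `R(T,ρ₀) = r₀(1 − (T²+r₀²)/α²)` and
`R_{,ρ}(T,ρ₀) = 1 − (T²+3r₀²)/α²` at the boundary `ρ = ρ₀`. -/
theorem exterior_R_wave_and_matching
    (α r₀ ρ₀ : ℝ) (hα : 0 < α) (hr₀ : 0 < r₀)
    (R : ℝ → ℝ → ℝ)
    (hR : ∀ T ρ : ℝ, R T ρ = r₀ * (1 - r₀ ^ 2 / α ^ 2)
      + (1 - 3 * r₀ ^ 2 / α ^ 2) * (ρ - ρ₀)
      - ((T + ρ - ρ₀) ^ 3 - (T - ρ + ρ₀) ^ 3) / (6 * α ^ 2)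
      - r₀ * ((T - ρ + ρ₀) ^ 2 + (T + ρ - ρ₀) ^ 2) / (2 * α ^ 2)) :
    (∀ T ρ : ℝ,
      deriv (deriv (fun s => R s ρ)) T = deriv (deriv (fun x => R T x)) ρ) ∧
    (∀ T : ℝ, R T ρ₀ = r₀ * (1 - (T ^ 2 + r₀ ^ 2) / α ^ 2)) ∧
    (∀ T : ℝ, deriv (fun x => R T x) ρ₀ = 1 - (T ^ 2 + 3 * r₀ ^ 2) / α ^ 2) := by
  have hα2 : α ^ 2 ≠ 0 := pow_ne_zero 2 (ne_of_gt hα)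
  -- As a function of T (for fixed ρ), R is the quadratic  A(ρ) + B(ρ) T².
  have hT : ∀ ρ : ℝ, (fun s => R s ρ)
      = fun s : ℝ => (r₀ * (1 - r₀ ^ 2 / α ^ 2) + (1 - 3 * r₀ ^ 2 / α ^ 2) * (ρ - ρ₀)
          - (ρ - ρ₀) ^ 3 / (3 * α ^ 2) - r₀ * (ρ - ρ₀) ^ 2 / α ^ 2)
        + 0 * s + (-(ρ - ρ₀ + r₀) / α ^ 2) * s ^ 2 + 0 * s ^ 3 := by
    intro ρ
    funext s
    rw [hR]
    field_simp
    ring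
  -- As a function of ρ (for fixed T), R is a cubic in ρ.
  have hρ : ∀ T : ℝ, (fun x => R T x)
      = fun x : ℝ => (r₀ * (1 - r₀ ^ 2 / α ^ 2) - (1 - 3 * r₀ ^ 2 / α ^ 2) * ρ₀
          + ρ₀ ^ 3 / (3 * α ^ 2) - r₀ * ρ₀ ^ 2 / α ^ 2
          + ρ₀ * T ^ 2 / α ^ 2 - r₀ * T ^ 2 / α ^ 2)
        + ((1 - 3 * r₀ ^ 2 / α ^ 2) - ρ₀ ^ 2 / α ^ 2
            + 2 * r₀ * ρ₀ / α ^ 2 - T ^ 2 / α ^ 2) * x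
        + ((ρ₀ - r₀) / α ^ 2) * x ^ 2 + (-(1 / (3 * α ^ 2))) * x ^ 3 := by
    intro T
    funext x
    rw [hR]
    field_simp
    ring
  refine ⟨?_, ?_, ?_⟩
  · intro T ρ
    rw [hT ρ, cubic_deriv]
    rw [hρ T, cubic_deriv]
    have e1 : (fun x : ℝ => 0 + 2 * (-(ρ - ρ₀ + r₀) / α ^ 2) * x + 3 * 0 * x ^ 2)
        = fun x : ℝ => 0 + (2 * (-(ρ - ρ₀ + r₀) / α ^ 2)) * x + 0 * x ^ 2 + 0 * x ^ 3 := by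
      funext x; ring
    have e2 : (fun x : ℝ => ((1 - 3 * r₀ ^ 2 / α ^ 2) - ρ₀ ^ 2 / α ^ 2
            + 2 * r₀ * ρ₀ / α ^ 2 - T ^ 2 / α ^ 2)
          + 2 * ((ρ₀ - r₀) / α ^ 2) * x + 3 * (-(1 / (3 * α ^ 2))) * x ^ 2)
        = fun x : ℝ => ((1 - 3 * r₀ ^ 2 / α ^ 2) - ρ₀ ^ 2 / α ^ 2
            + 2 * r₀ * ρ₀ / α ^ 2 - T ^ 2 / α ^ 2)
          + (2 * ((ρ₀ - r₀) / α ^ 2)) * x + (-(1 / α ^ 2)) * x ^ 2 + 0 * x ^ 3 := by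
      funext x; field_simp; ring
    rw [e1, cubic_deriv, e2, cubic_deriv]
    field_simp
    ring
  · intro T
    rw [hR]
    field_simp
    ring
  · intro T
    rw [hρ T, cubic_deriv]
    field_simp
    ring
end

section
/- Fix α > 0, ρ₀ ∈ ℝ, and 0 < r₀ < α/√3, and let R(T,ρ) be the exterior solution R(T,ρ) = r₀(1 − r₀²/α²) + (1 − 3r₀²/α²)(ρ−ρ₀) − [ (T+ρ−ρ₀)³ − (T−ρ+ρ₀)³ ]/(6α²) − r₀[ (T−ρ+ρ₀)² + (T+ρ−ρ₀)² ]/(2α²). Then the set { T > 0 : (∂R/∂T + ∂R/∂ρ)(T,ρ₀) = 0 } consists of the single point T₀ = −r₀ + √(α² − 2r₀²), and this T₀ coincides with the unique positive zero of the interior outgoing null expansion θ⁺(·, r₀), i.e. the unique positive solution t of t² + 2t·r₀ + 3r₀² = α². Hence the exterior marginally outer trapped cylinders meet the interior marginally outer trapped cylinders at the matching boundary. -/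
/-!
In the shifted radius `x = ρ - ρ₀ + r₀` the exterior solution is the cubic
`R = x (1 - (x² / 3 + T² + 2 r₀²) / α²) + 4 r₀³ / (3 α²)`, so its outgoing null derivative
`(∂_T + ∂_ρ) R = 1 - (u² + 2 r₀ u + 3 r₀²) / α²` depends only on the advanced time
`u = T + ρ - ρ₀`. On the matching surface `u = T`, so the exterior condition is exactly the
interior equation `T² + 2 T r₀ + 3 r₀² = α²`, i.e. `(T + r₀)² = α² - 2 r₀²`; since
`3 r₀² < α²` the root `-r₀ - √(α² - 2 r₀²)` is negative and `-r₀ + √(α² - 2 r₀²)` is positive.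
-/

open Real

noncomputable def exteriorR (α r₀ ρ₀ T ρ : ℝ) : ℝ :=
  r₀ * (1 - r₀ ^ 2 / α ^ 2) + (1 - 3 * r₀ ^ 2 / α ^ 2) * (ρ - ρ₀)
    - ((T + ρ - ρ₀) ^ 3 - (T - ρ + ρ₀) ^ 3) / (6 * α ^ 2)
    - r₀ * ((T - ρ + ρ₀) ^ 2 + (T + ρ - ρ₀) ^ 2) / (2 * α ^ 2)

section exteriorR

variable (α r₀ ρ₀ : ℝ)

theorem exteriorR_eq (T ρ : ℝ) :
    exteriorR α r₀ ρ₀ T ρ =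
      (ρ - ρ₀ + r₀) * (1 - ((ρ - ρ₀ + r₀) ^ 2 / 3 + T ^ 2 + 2 * r₀ ^ 2) / α ^ 2)
        + 4 * r₀ ^ 3 / (3 * α ^ 2) := by
  unfold exteriorR
  ring

theorem hasDerivAt_exteriorR_time (T ρ : ℝ) :
    HasDerivAt (fun s ↦ exteriorR α r₀ ρ₀ s ρ) (-2 * T * (ρ - ρ₀ + r₀) / α ^ 2) T := by
  simp only [exteriorR_eq]
  exact ((((hasDerivAt_pow 2 T).const_add _).add_const _).div_const (α ^ 2)
    |>.const_sub 1 |>.const_mul (ρ - ρ₀ + r₀)).add_const _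
    |>.congr_deriv (by push_cast; ring)

theorem hasDerivAt_exteriorR_radial (T ρ : ℝ) :
    HasDerivAt (fun x ↦ exteriorR α r₀ ρ₀ T x)
      (1 - ((ρ - ρ₀ + r₀) ^ 2 + T ^ 2 + 2 * r₀ ^ 2) / α ^ 2) ρ := by
  simp only [exteriorR_eq]
  have hx : HasDerivAt (fun x : ℝ ↦ x - ρ₀ + r₀) 1 ρ :=
    ((hasDerivAt_id ρ).sub_const ρ₀).add_const r₀
  exact (hx.mul ((((hx.pow 2).div_const 3).add_const _).add_const _
    |>.div_const (α ^ 2) |>.const_sub 1)).add_const _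
    |>.congr_deriv (by simp only [Pi.pow_apply]; ring)

theorem deriv_exteriorR_time_add_radial (T ρ : ℝ) :
    deriv (fun s ↦ exteriorR α r₀ ρ₀ s ρ) T + deriv (fun x ↦ exteriorR α r₀ ρ₀ T x) ρ =
      1 - ((T + ρ - ρ₀) ^ 2 + 2 * (T + ρ - ρ₀) * r₀ + 3 * r₀ ^ 2) / α ^ 2 := by
  rw [(hasDerivAt_exteriorR_time α r₀ ρ₀ T ρ).deriv,
    (hasDerivAt_exteriorR_radial α r₀ ρ₀ T ρ).deriv]
  ring

end exteriorR

theorem three_mul_sq_lt_sq_of_lt_div_sqrt_three {r a : ℝ} (hr : 0 ≤ r) (h : r < a / √3) :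
    3 * r ^ 2 < a ^ 2 := by
  have hsq : r ^ 2 < (a / √3) ^ 2 := pow_lt_pow_left₀ h hr two_ne_zero
  rw [div_pow, sq_sqrt zero_le_three] at hsq
  linarith

theorem pos_and_sq_add_two_mul_add_three_mul_sq_eq_iff {r a t : ℝ} (h : 3 * r ^ 2 < a) :
    (0 < t ∧ t ^ 2 + 2 * t * r + 3 * r ^ 2 = a) ↔ t = -r + √(a - 2 * r ^ 2) := by
  set s := √(a - 2 * r ^ 2)
  have hs : s ^ 2 = a - 2 * r ^ 2 := sq_sqrt (by nlinarith)
  have hrs : |r| < s := abs_lt_of_sq_lt_sq (by linarith) (sqrt_nonneg _)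
  obtain ⟨hrs₁, hrs₂⟩ := abs_lt.mp hrs
  constructor
  · rintro ⟨ht, hEq⟩
    have hfac : (t + r - s) * (t + r + s) = 0 := by linear_combination hEq - hs
    have hroot : t + r + s ≠ 0 := by linarith
    linarith [(mul_eq_zero.mp hfac).resolve_right hroot]
  · rintro rfl
    exact ⟨by linarith, by linear_combination hs⟩

theorem trapped_cylinders_match_at_boundary_general
    (α r₀ ρ₀ : ℝ) (hr₀ : 0 < r₀) (hr₀' : r₀ < α / Real.sqrt 3)
    (R : ℝ → ℝ → ℝ)
    (hR : ∀ T ρ : ℝ, R T ρ = r₀ * (1 - r₀ ^ 2 / α ^ 2)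
      + (1 - 3 * r₀ ^ 2 / α ^ 2) * (ρ - ρ₀)
      - ((T + ρ - ρ₀) ^ 3 - (T - ρ + ρ₀) ^ 3) / (6 * α ^ 2)
      - r₀ * ((T - ρ + ρ₀) ^ 2 + (T + ρ - ρ₀) ^ 2) / (2 * α ^ 2)) :
    {T : ℝ | 0 < T ∧
        deriv (fun s => R s ρ₀) T + deriv (fun x => R T x) ρ₀ = 0}
      = {-r₀ + Real.sqrt (α ^ 2 - 2 * r₀ ^ 2)} ∧
    0 < -r₀ + Real.sqrt (α ^ 2 - 2 * r₀ ^ 2) ∧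
    (-r₀ + Real.sqrt (α ^ 2 - 2 * r₀ ^ 2)) ^ 2
        + 2 * (-r₀ + Real.sqrt (α ^ 2 - 2 * r₀ ^ 2)) * r₀ + 3 * r₀ ^ 2 = α ^ 2 ∧
    (∀ t : ℝ, 0 < t → t ^ 2 + 2 * t * r₀ + 3 * r₀ ^ 2 = α ^ 2 →
      t = -r₀ + Real.sqrt (α ^ 2 - 2 * r₀ ^ 2)) := by
  obtain rfl : R = exteriorR α r₀ ρ₀ := funext₂ hR
  have h3 := three_mul_sq_lt_sq_of_lt_div_sqrt_three hr₀.le hr₀'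
  have hα : α ^ 2 ≠ 0 := ((by positivity : (0 : ℝ) < 3 * r₀ ^ 2).trans h3).ne'
  have hinterior (t : ℝ) := pos_and_sq_add_two_mul_add_three_mul_sq_eq_iff (t := t) h3
  have hexterior (T : ℝ) : deriv (fun s ↦ exteriorR α r₀ ρ₀ s ρ₀) T
      + deriv (fun x ↦ exteriorR α r₀ ρ₀ T x) ρ₀ = 0 ↔ T ^ 2 + 2 * T * r₀ + 3 * r₀ ^ 2 = α ^ 2 := by
    rw [deriv_exteriorR_time_add_radial, add_sub_cancel_right, sub_eq_zero, eq_comm,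
      div_eq_one_iff_eq hα]
  obtain ⟨hT₀pos, hT₀⟩ := (hinterior _).mpr rfl
  refine ⟨Set.ext fun T ↦ ?_, hT₀pos, hT₀, fun t ht hEq ↦ (hinterior t).mp ⟨ht, hEq⟩⟩
  rw [Set.mem_ofPred_eq, hexterior, hinterior, Set.mem_singleton_iff]

/-- For `0 < r₀ < α/√3`, the set of positive times `T` at which the exterior
solution `R` has a marginally outer trapped cylinder on the matching surface
(`R_{,T} + R_{,ρ} = 0` at `(T,ρ₀)`) is exactly `{T₀}` with
`T₀ = −r₀ + √(α² − 2r₀²)`, and `T₀` is the unique positive solution of the interior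
marginally-outer-trapped-cylinder equation `t² + 2tr₀ + 3r₀² = α²`; hence the
exterior marginally outer trapped cylinders meet the interior ones at the boundary. -/
theorem trapped_cylinders_match_at_boundary
    (α r₀ ρ₀ : ℝ) (hα : 0 < α) (hr₀ : 0 < r₀) (hr₀' : r₀ < α / Real.sqrt 3)
    (R : ℝ → ℝ → ℝ)
    (hR : ∀ T ρ : ℝ, R T ρ = r₀ * (1 - r₀ ^ 2 / α ^ 2)
      + (1 - 3 * r₀ ^ 2 / α ^ 2) * (ρ - ρ₀)
      - ((T + ρ - ρ₀) ^ 3 - (T - ρ + ρ₀) ^ 3) / (6 * α ^ 2)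
      - r₀ * ((T - ρ + ρ₀) ^ 2 + (T + ρ - ρ₀) ^ 2) / (2 * α ^ 2)) :
    {T : ℝ | 0 < T ∧
        deriv (fun s => R s ρ₀) T + deriv (fun x => R T x) ρ₀ = 0}
      = {-r₀ + Real.sqrt (α ^ 2 - 2 * r₀ ^ 2)} ∧
    0 < -r₀ + Real.sqrt (α ^ 2 - 2 * r₀ ^ 2) ∧
    (-r₀ + Real.sqrt (α ^ 2 - 2 * r₀ ^ 2)) ^ 2
        + 2 * (-r₀ + Real.sqrt (α ^ 2 - 2 * r₀ ^ 2)) * r₀ + 3 * r₀ ^ 2 = α ^ 2 ∧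
    (∀ t : ℝ, 0 < t → t ^ 2 + 2 * t * r₀ + 3 * r₀ ^ 2 = α ^ 2 →
      t = -r₀ + Real.sqrt (α ^ 2 - 2 * r₀ ^ 2)) :=
  trapped_cylinders_match_at_boundary_general α r₀ ρ₀ hr₀ hr₀' R hR
end

section
/- Fix α > 0, ρ₀ ∈ ℝ and 0 < r₀ < α/√3, and let R(T,ρ) = r₀(1 − r₀²/α²) + (1 − 3r₀²/α²)(ρ−ρ₀) − [ (T+ρ−ρ₀)³ − (T−ρ+ρ₀)³ ]/(6α²) − r₀[ (T−ρ+ρ₀)² + (T+ρ−ρ₀)² ]/(2α²). Let ψ be a C² function on a neighborhood of the segment { (T,ρ₀) : 0 ≤ T < √(α²−r₀²) } satisfying there the vacuum wave equation ∂ₜₜψ + (∂ₜR/R)∂ₜψ − ∂ᵨᵨψ − (∂ᵨR/R)∂ᵨψ = 0 (derivatives with respect to T and ρ), together with the matching conditions ψ(T,ρ₀) = ln(1 − (T²+r₀²)/α²) and ∂ᵨψ(T,ρ₀) = −(2r₀/α²)·(1 − (T²+r₀²)/α²)^{−1}. Then for every T with 0 ≤ T < √(α²−r₀²): (∂ₜₜψ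 − ∂ᵨᵨψ + (∂ₜψ)² − (∂ᵨψ)²)(T,ρ₀) = −2/(α² − T² − r₀²). In particular the Weyl scalar Ψ₂ = ½ e^{2(ψ−γ)}(∂ₜₜψ − ∂ᵨᵨψ + (∂ₜψ)² − (∂ᵨψ)²) equals −1/(α² − T² − r₀²) on the matching surface (where γ = ψ), which is negative and diverges as T² → α² − r₀². -/
/-!
On the matching surface the boundary data fix everything except the second derivatives:
`ψ_T` is the time derivative of `ψ = log q` with `q = 1 - (T² + r₀²)/α²`, `ψ_ρ` is prescribed,
and `R = r₀ q` there. The wave equation then expresses `ψ_TT - ψ_ρρ` through first derivatives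
only, and the Weyl combination collapses to `-2/(α² q)`.
-/

open Filter Topology

noncomputable def matchingRadius (α r₀ ρ₀ T ρ : ℝ) : ℝ :=
  r₀ * (1 - r₀ ^ 2 / α ^ 2) + (1 - 3 * r₀ ^ 2 / α ^ 2) * (ρ - ρ₀)
    - ((T + ρ - ρ₀) ^ 3 - (T - ρ + ρ₀) ^ 3) / (6 * α ^ 2)
    - r₀ * ((T - ρ + ρ₀) ^ 2 + (T + ρ - ρ₀) ^ 2) / (2 * α ^ 2)

lemma matchingRadius_eq_taylor (α r₀ ρ₀ T ρ : ℝ) :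
    matchingRadius α r₀ ρ₀ T ρ = r₀ * (1 - (T ^ 2 + r₀ ^ 2) / α ^ 2)
      + (1 - (T ^ 2 + 3 * r₀ ^ 2) / α ^ 2) * (ρ - ρ₀)
      - r₀ * (ρ - ρ₀) ^ 2 / α ^ 2 - (ρ - ρ₀) ^ 3 / (3 * α ^ 2) := by
  unfold matchingRadius
  ring

lemma matchingRadius_self (α r₀ ρ₀ T : ℝ) :
    matchingRadius α r₀ ρ₀ T ρ₀ = r₀ * (1 - (T ^ 2 + r₀ ^ 2) / α ^ 2) := by
  simp [matchingRadius_eq_taylor]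

lemma hasDerivAt_one_sub_sq_add_div (a c t : ℝ) :
    HasDerivAt (fun s => 1 - (s ^ 2 + c) / a) (-(2 * t / a)) t := by
  simpa using (((hasDerivAt_pow 2 t).add_const c).div_const a).const_sub 1

lemma hasDerivAt_matchingRadius_fst (α r₀ ρ₀ T : ℝ) :
    HasDerivAt (fun s => matchingRadius α r₀ ρ₀ s ρ₀) (r₀ * -(2 * T / α ^ 2)) T := by
  simpa only [matchingRadius_self] using
    (hasDerivAt_one_sub_sq_add_div (α ^ 2) (r₀ ^ 2) T).const_mul r₀

lemma hasDerivAt_matchingRadius_snd (α r₀ ρ₀ T : ℝ) :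
    HasDerivAt (matchingRadius α r₀ ρ₀ T)
      (1 - (T ^ 2 + r₀ ^ 2) / α ^ 2 - r₀ * (2 * r₀ / α ^ 2)) ρ₀ := by
  have hu : HasDerivAt (fun ρ : ℝ => ρ - ρ₀) 1 ρ₀ := (hasDerivAt_id ρ₀).sub_const ρ₀
  have h := (((hu.const_mul (1 - (T ^ 2 + 3 * r₀ ^ 2) / α ^ 2)).const_add
    (r₀ * (1 - (T ^ 2 + r₀ ^ 2) / α ^ 2))).sub (((hu.fun_pow 2).const_mul r₀).div_const (α ^ 2))).sub
    ((hu.fun_pow 3).div_const (3 * α ^ 2))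
  refine (h.congr_deriv (by simp only [sub_self]; ring)).congr_of_eventuallyEq (.of_forall fun ρ => ?_)
  exact matchingRadius_eq_taylor α r₀ ρ₀ T ρ

/-- `Ici t` is a set of unique differentiability, so agreement to the right of `t` pins down the
derivative at `t`. -/
lemma deriv_eq_of_eqOn_Ico {f g : ℝ → ℝ} {g' a b t : ℝ} (hf : DifferentiableAt ℝ f t)
    (hg : HasDerivAt g g' t) (ht : t ∈ Set.Ico a b) (hfg : Set.EqOn f g (Set.Ico a b)) :
    deriv f t = g' := by
  have hfg' : f =ᶠ[𝓝[≥] t] g := eventually_of_mem (Ico_mem_nhdsGE_of_mem ht) hfg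
  exact (uniqueDiffWithinAt_Ici t).eq_deriv _ hf.hasDerivAt.hasDerivWithinAt
    (hg.hasDerivWithinAt.congr_of_eventuallyEq hfg' (hfg ht))

/-- The wave equation at a boundary point, with `a = ψ_TT`, `b = ψ_ρρ`, `ψ_T = p/q`, `ψ_ρ = -c/q`,
`R = r q`, `R_T = r p`, `R_ρ = q - r c`; the time derivative `p` drops out. -/
lemma weyl_combination_of_wave {a b p q r c : ℝ} (hr : r ≠ 0) (hq : q ≠ 0)
    (hwave : a + r * p / (r * q) * (p / q) - b - (q - r * c) / (r * q) * (-c * q⁻¹) = 0) :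
    a - b + (p / q) ^ 2 - (-c * q⁻¹) ^ 2 = -c / (r * q) := by
  field_simp at hwave ⊢
  linear_combination hwave

theorem weyl_scalar_Psi2_on_boundary_general
    (α r₀ ρ₀ : ℝ) (hr₀ : 0 < r₀)
    (R ψ : ℝ → ℝ → ℝ)
    (hR : ∀ T ρ : ℝ, R T ρ = r₀ * (1 - r₀ ^ 2 / α ^ 2)
      + (1 - 3 * r₀ ^ 2 / α ^ 2) * (ρ - ρ₀)
      - ((T + ρ - ρ₀) ^ 3 - (T - ρ + ρ₀) ^ 3) / (6 * α ^ 2)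
      - r₀ * ((T - ρ + ρ₀) ^ 2 + (T + ρ - ρ₀) ^ 2) / (2 * α ^ 2))
    (U : Set (ℝ × ℝ)) (hUopen : IsOpen U)
    (hseg : ∀ T : ℝ, 0 ≤ T → T < Real.sqrt (α ^ 2 - r₀ ^ 2) → (T, ρ₀) ∈ U)
    (hψ : ContDiffOn ℝ 2 (fun p : ℝ × ℝ => ψ p.1 p.2) U)
    (hwave : ∀ p : ℝ × ℝ, p ∈ U →
      deriv (deriv (fun s => ψ s p.2)) p.1
        + (deriv (fun s => R s p.2) p.1 / R p.1 p.2) * deriv (fun s => ψ s p.2) p.1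
        - deriv (deriv (fun x => ψ p.1 x)) p.2
        - (deriv (fun x => R p.1 x) p.2 / R p.1 p.2)
          * deriv (fun x => ψ p.1 x) p.2 = 0)
    (hmatch1 : ∀ T : ℝ, 0 ≤ T → T < Real.sqrt (α ^ 2 - r₀ ^ 2) →
      ψ T ρ₀ = Real.log (1 - (T ^ 2 + r₀ ^ 2) / α ^ 2))
    (hmatch2 : ∀ T : ℝ, 0 ≤ T → T < Real.sqrt (α ^ 2 - r₀ ^ 2) →
      deriv (fun x => ψ T x) ρ₀
        = -(2 * r₀ / α ^ 2) * (1 - (T ^ 2 + r₀ ^ 2) / α ^ 2)⁻¹) :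
    ∀ T : ℝ, 0 ≤ T → T < Real.sqrt (α ^ 2 - r₀ ^ 2) →
      (deriv (deriv (fun s => ψ s ρ₀)) T - deriv (deriv (fun x => ψ T x)) ρ₀
          + (deriv (fun s => ψ s ρ₀) T) ^ 2 - (deriv (fun x => ψ T x) ρ₀) ^ 2
          = -2 / (α ^ 2 - T ^ 2 - r₀ ^ 2)) ∧
      ((1 / 2 : ℝ) * (deriv (deriv (fun s => ψ s ρ₀)) T
          - deriv (deriv (fun x => ψ T x)) ρ₀
          + (deriv (fun s => ψ s ρ₀) T) ^ 2 - (deriv (fun x => ψ T x) ρ₀) ^ 2)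
          = -1 / (α ^ 2 - T ^ 2 - r₀ ^ 2)) ∧
      -1 / (α ^ 2 - T ^ 2 - r₀ ^ 2) < 0 := by
  intro T hT0 hTs
  obtain rfl : R = matchingRadius α r₀ ρ₀ := funext fun T => funext (hR T)
  have hD : 0 < α ^ 2 - T ^ 2 - r₀ ^ 2 := by
    linarith [(Real.lt_sqrt hT0).mp hTs]
  have hα : α ≠ 0 := by
    rintro rfl
    nlinarith [sq_nonneg T, sq_nonneg r₀]
  have hqD : 1 - (T ^ 2 + r₀ ^ 2) / α ^ 2 = (α ^ 2 - T ^ 2 - r₀ ^ 2) / α ^ 2 := by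
    field_simp
    ring
  have hq : 1 - (T ^ 2 + r₀ ^ 2) / α ^ 2 ≠ 0 := by
    rw [hqD]
    exact div_ne_zero hD.ne' (pow_ne_zero 2 hα)
  have hmem : (T, ρ₀) ∈ U := hseg T hT0 hTs
  have hψ_diff : DifferentiableAt ℝ (fun s => ψ s ρ₀) T :=
    ((hψ.contDiffAt (hUopen.mem_nhds hmem)).differentiableAt (by norm_num)).comp
      (f := fun s : ℝ => (s, ρ₀)) T (by fun_prop)
  have hψT : deriv (fun s => ψ s ρ₀) T = -(2 * T / α ^ 2) / (1 - (T ^ 2 + r₀ ^ 2) / α ^ 2) :=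
    deriv_eq_of_eqOn_Ico hψ_diff ((hasDerivAt_one_sub_sq_add_div _ _ T).log hq) ⟨hT0, hTs⟩
      fun s hs => hmatch1 s hs.1 hs.2
  have hwaveT := hwave (T, ρ₀) hmem
  rw [hψT, hmatch2 T hT0 hTs, (hasDerivAt_matchingRadius_fst α r₀ ρ₀ T).deriv,
    (hasDerivAt_matchingRadius_snd α r₀ ρ₀ T).deriv, matchingRadius_self] at hwaveT
  have hweyl : deriv (deriv (fun s => ψ s ρ₀)) T - deriv (deriv (fun x => ψ T x)) ρ₀
      + (deriv (fun s => ψ s ρ₀) T) ^ 2 - (deriv (fun x => ψ T x) ρ₀) ^ 2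
      = -2 / (α ^ 2 - T ^ 2 - r₀ ^ 2) := by
    rw [hψT, hmatch2 T hT0 hTs, weyl_combination_of_wave hr₀.ne' hq hwaveT, hqD]
    field_simp
  exact ⟨hweyl, by rw [hweyl]; ring, div_neg_of_neg_of_pos (by norm_num) hD⟩

/-- For any `C²` solution `ψ` of the vacuum wave equation
`ψ_{,TT} + (R_{,T}/R)ψ_{,T} − ψ_{,ρρ} − (R_{,ρ}/R)ψ_{,ρ} = 0` on a neighborhood `U`
of the matching segment `{(T,ρ₀) : 0 ≤ T < √(α²−r₀²)}`, satisfying the matching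
conditions `ψ(T,ρ₀) = ln(1 − (T²+r₀²)/α²)` and
`ψ_{,ρ}(T,ρ₀) = −(2r₀/α²)(1 − (T²+r₀²)/α²)⁻¹`, the combination
`ψ_{,TT} − ψ_{,ρρ} + ψ_{,T}² − ψ_{,ρ}²` equals `−2/(α² − T² − r₀²)` on the segment;
in particular the Weyl scalar `Ψ₂ = ½(ψ_{,TT} − ψ_{,ρρ} + ψ_{,T}² − ψ_{,ρ}²)`
(where `γ = ψ` on the matching surface) equals `−1/(α² − T² − r₀²)` there, which is
negative. -/
theorem weyl_scalar_Psi2_on_boundary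
    (α r₀ ρ₀ : ℝ) (hα : 0 < α) (hr₀ : 0 < r₀)
    (R ψ : ℝ → ℝ → ℝ)
    (hR : ∀ T ρ : ℝ, R T ρ = r₀ * (1 - r₀ ^ 2 / α ^ 2)
      + (1 - 3 * r₀ ^ 2 / α ^ 2) * (ρ - ρ₀)
      - ((T + ρ - ρ₀) ^ 3 - (T - ρ + ρ₀) ^ 3) / (6 * α ^ 2)
      - r₀ * ((T - ρ + ρ₀) ^ 2 + (T + ρ - ρ₀) ^ 2) / (2 * α ^ 2))
    (U : Set (ℝ × ℝ)) (hUopen : IsOpen U)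
    (hseg : ∀ T : ℝ, 0 ≤ T → T < Real.sqrt (α ^ 2 - r₀ ^ 2) → (T, ρ₀) ∈ U)
    (hψ : ContDiffOn ℝ 2 (fun p : ℝ × ℝ => ψ p.1 p.2) U)
    (hwave : ∀ p : ℝ × ℝ, p ∈ U →
      deriv (deriv (fun s => ψ s p.2)) p.1
        + (deriv (fun s => R s p.2) p.1 / R p.1 p.2) * deriv (fun s => ψ s p.2) p.1
        - deriv (deriv (fun x => ψ p.1 x)) p.2
        - (deriv (fun x => R p.1 x) p.2 / R p.1 p.2)
          * deriv (fun x => ψ p.1 x) p.2 = 0)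
    (hmatch1 : ∀ T : ℝ, 0 ≤ T → T < Real.sqrt (α ^ 2 - r₀ ^ 2) →
      ψ T ρ₀ = Real.log (1 - (T ^ 2 + r₀ ^ 2) / α ^ 2))
    (hmatch2 : ∀ T : ℝ, 0 ≤ T → T < Real.sqrt (α ^ 2 - r₀ ^ 2) →
      deriv (fun x => ψ T x) ρ₀
        = -(2 * r₀ / α ^ 2) * (1 - (T ^ 2 + r₀ ^ 2) / α ^ 2)⁻¹) :
    ∀ T : ℝ, 0 ≤ T → T < Real.sqrt (α ^ 2 - r₀ ^ 2) →
      (deriv (deriv (fun s => ψ s ρ₀)) T - deriv (deriv (fun x => ψ T x)) ρ₀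
          + (deriv (fun s => ψ s ρ₀) T) ^ 2 - (deriv (fun x => ψ T x) ρ₀) ^ 2
          = -2 / (α ^ 2 - T ^ 2 - r₀ ^ 2)) ∧
      ((1 / 2 : ℝ) * (deriv (deriv (fun s => ψ s ρ₀)) T
          - deriv (deriv (fun x => ψ T x)) ρ₀
          + (deriv (fun s => ψ s ρ₀) T) ^ 2 - (deriv (fun x => ψ T x) ρ₀) ^ 2)
          = -1 / (α ^ 2 - T ^ 2 - r₀ ^ 2)) ∧
      -1 / (α ^ 2 - T ^ 2 - r₀ ^ 2) < 0 :=
  weyl_scalar_Psi2_on_boundary_general α r₀ ρ₀ hr₀ R ψ hR U hUopen hseg hψ hwave hmatch1 hmatch2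
end
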